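/- arXiv:1304.0541 — 8 statements merged into one kernel-verified Lean document; each statement's English description precedes it below -/
import Mathlib

section
/- If ω is a finite-component open covering of a space X, then the bodies of the distinct components of ω form a partition of X into pairwise disjoint clopen sets. -/
open Set Relation TopologicalSpace

/-- One step of a chain: two members of ω that intersect. -/
def ChainStep {X : Type*} (ω : Set (Set X)) (A B : Set X) : Prop :=
  A ∈ ω ∧ B ∈ ω ∧ (A ∩ B).Nonempty

/-- Two sets are enchained in ω if they are connected by a finite chain of
consecutively intersecting members of ω (a chain of length 0 is allowed). -/
def Enchained {X : Type*} (ω : Set (Set X)) (M M' : Set X) : Prop :=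
  Relation.ReflTransGen (ChainStep ω) M M'

/-- The component of M in ω : the maximal enchained subsystem containing M. -/
def Component {X : Type*} (ω : Set (Set X)) (M : Set X) : Set (Set X) :=
  {N | N ∈ ω ∧ Enchained ω M N}

/-- A finite-component cover: a star-finite open cover all of whose
chain-components are finite. -/
def IsFiniteComponentCover {X : Type*} [TopologicalSpace X] (ω : Set (Set X)) : Prop :=
  (∀ A ∈ ω, IsOpen A) ∧ ⋃₀ ω = Set.univ ∧
  (∀ A ∈ ω, {B ∈ ω | (A ∩ B).Nonempty}.Finite) ∧
  (∀ M ∈ ω, (Component ω M).Finite)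

/-- A space is superparacompact if every open cover admits an inscribed
(finite-component, open) refinement. -/
def Superparacompact (X : Type*) [TopologicalSpace X] : Prop :=
  ∀ 𝒰 : Set (Set X), (∀ U ∈ 𝒰, IsOpen U) → ⋃₀ 𝒰 = Set.univ →
    ∃ ω : Set (Set X), IsFiniteComponentCover ω ∧ ∀ A ∈ ω, ∃ U ∈ 𝒰, A ⊆ U


lemma enchained_symm {X : Type*} {ω : Set (Set X)} {A B : Set X}
    (h : Enchained ω A B) : Enchained ω B A := by
  have hs : Symmetric (ChainStep ω) := fun a b ⟨ha, hb, hn⟩ =>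
    ⟨hb, ha, by rwa [Set.inter_comm]⟩
  exact (@Relation.ReflTransGen.stdSymm _ _ ⟨hs⟩).symm _ _ h

lemma component_eq {X : Type*} {ω : Set (Set X)} {M M' : Set X}
    (h : Enchained ω M M') : Component ω M = Component ω M' := by
  ext N
  constructor
  · rintro ⟨hN, hE⟩; exact ⟨hN, (enchained_symm h).trans hE⟩
  · rintro ⟨hN, hE⟩; exact ⟨hN, h.trans hE⟩

/-- The bodies of the components of a finite-component open cover form a
partition of X into pairwise disjoint clopen sets. -/
theorem bodies_partition {X : Type*} [TopologicalSpace X]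
    (ω : Set (Set X)) (hω : IsFiniteComponentCover ω) :
    (∀ M ∈ ω, IsClopen (⋃₀ Component ω M)) ∧
    (⋃ M ∈ ω, ⋃₀ Component ω M) = Set.univ ∧
    (∀ M ∈ ω, ∀ M' ∈ ω,
      ⋃₀ Component ω M = ⋃₀ Component ω M' ∨
      Disjoint (⋃₀ Component ω M) (⋃₀ Component ω M')) := by
  obtain ⟨hopen, hcov, _, _⟩ := hω
  -- membership in body forces enchainment
  have key : ∀ M ∈ ω, ∀ N ∈ ω, ∀ x, x ∈ ⋃₀ Component ω M → x ∈ N →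
      Enchained ω M N := by
    intro M hM N hN x hx hxN
    obtain ⟨A, ⟨hAω, hAE⟩, hxA⟩ := hx
    exact hAE.trans (Relation.ReflTransGen.single ⟨hAω, hN, ⟨x, hxA, hxN⟩⟩)
  refine ⟨?_, ?_, ?_⟩
  · intro M hM
    constructor
    · -- closed: complement is open
      rw [← isOpen_compl_iff]
      have : (⋃₀ Component ω M)ᶜ = ⋃₀ {N ∈ ω | ¬ Enchained ω M N} := by
        ext x
        simp only [mem_compl_iff, mem_sUnion, mem_setOf_eq]
        constructor
        · intro hx
          have : x ∈ ⋃₀ ω := hcov ▸ mem_univ x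
          obtain ⟨N, hNω, hxN⟩ := this
          refine ⟨N, ⟨hNω, fun hE => hx ⟨N, ⟨hNω, hE⟩, hxN⟩⟩, hxN⟩
        · rintro ⟨N, ⟨hNω, hNE⟩, hxN⟩ ⟨A, ⟨hAω, hAE⟩, hxA⟩
          exact hNE (hAE.trans (Relation.ReflTransGen.single ⟨hAω, hNω, ⟨x, hxA, hxN⟩⟩))
      rw [this]
      exact isOpen_sUnion fun N hN => hopen N hN.1
    · exact isOpen_sUnion fun N hN => hopen N hN.1
  · apply eq_univ_of_forall
    intro x
    have : x ∈ ⋃₀ ω := hcov ▸ mem_univ x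
    obtain ⟨M, hMω, hxM⟩ := this
    exact mem_iUnion₂.mpr ⟨M, hMω, ⟨M, ⟨hMω, Relation.ReflTransGen.refl⟩, hxM⟩⟩
  · intro M hM M' hM'
    by_cases h : Disjoint (⋃₀ Component ω M) (⋃₀ Component ω M')
    · exact Or.inr h
    · left
      rw [Set.not_disjoint_iff] at h
      obtain ⟨x, hx, hx'⟩ := h
      obtain ⟨B, ⟨hBω, hBE⟩, hxB⟩ := hx'
      have hE : Enchained ω M M' :=
        ((key M hM B hBω x hx hxB).trans (enchained_symm hBE))
      rw [component_eq hE]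
end

section
/- Every closed subspace of a superparacompact space is superparacompact. -/
open Set Relation TopologicalSpace

/-- Every closed subspace of a superparacompact space is superparacompact. -/
theorem superparacompact_closed_subspace {X : Type*} [TopologicalSpace X]
    [T2Space X] (hX : Superparacompact X)
    (F : Set X) (hF : IsClosed F) :
    Superparacompact F := by
  intro 𝒰 hopen hcov
  -- choose open extensions
  have hext : ∀ U ∈ 𝒰, ∃ V : Set X, IsOpen V ∧ U = (Subtype.val : F → X) ⁻¹' V := by
    intro U hU
    rcases isOpen_induced_iff.mp (hopen U hU) with ⟨V, hV, hVU⟩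
    exact ⟨V, hV, hVU.symm⟩
  choose! V hVopen hVeq using hext
  set 𝒱 : Set (Set X) := (fun U => V U) '' 𝒰 ∪ {Fᶜ} with h𝒱
  have h𝒱open : ∀ W ∈ 𝒱, IsOpen W := by
    rintro W (⟨U, hU, rfl⟩ | rfl)
    · exact hVopen U hU
    · exact hF.isOpen_compl
  have h𝒱cov : ⋃₀ 𝒱 = Set.univ := by
    ext x
    simp only [mem_sUnion, mem_univ, iff_true]
    by_cases hx : x ∈ F
    · have : (⟨x, hx⟩ : F) ∈ ⋃₀ 𝒰 := by rw [hcov]; trivial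
      rcases this with ⟨U, hU, hxU⟩
      refine ⟨V U, Or.inl ⟨U, hU, rfl⟩, ?_⟩
      have := hVeq U hU
      rw [this] at hxU
      exact hxU
    · exact ⟨Fᶜ, Or.inr rfl, hx⟩
  rcases hX 𝒱 h𝒱open h𝒱cov with ⟨ω, ⟨hωopen, hωcov, hωstar, hωcomp⟩, hωref⟩
  -- the induced family on F
  set p : Set X → Set F := fun A => (Subtype.val : F → X) ⁻¹' A with hp
  set σ : Set (Set X) := {A ∈ ω | (p A).Nonempty} with hσ
  set ω' : Set (Set F) := p '' σ with hω'
  have memω' : ∀ A' ∈ ω', ∃ A ∈ ω, (p A).Nonempty ∧ A' = p A := by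
    rintro A' ⟨A, ⟨hA, hAne⟩, rfl⟩
    exact ⟨A, hA, hAne, rfl⟩
  have interlift : ∀ A B : Set X, ((p A) ∩ (p B)).Nonempty → (A ∩ B).Nonempty := by
    rintro A B ⟨z, hzA, hzB⟩
    exact ⟨z, hzA, hzB⟩
  refine ⟨ω', ⟨?_, ?_, ?_, ?_⟩, ?_⟩
  · rintro A' hA'
    rcases memω' A' hA' with ⟨A, hA, _, rfl⟩
    exact (hωopen A hA).preimage continuous_subtype_val
  · ext z
    simp only [mem_sUnion, mem_univ, iff_true]
    have : (z : X) ∈ ⋃₀ ω := by rw [hωcov]; trivial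
    rcases this with ⟨A, hA, hzA⟩
    exact ⟨p A, ⟨A, ⟨hA, ⟨z, hzA⟩⟩, rfl⟩, hzA⟩
  · intro A' hA'
    rcases memω' A' hA' with ⟨A, hA, _, rfl⟩
    have hsub : {B' ∈ ω' | (p A ∩ B').Nonempty} ⊆ p '' {B ∈ ω | (A ∩ B).Nonempty} := by
      rintro B' ⟨hB', hne⟩
      rcases memω' B' hB' with ⟨B, hB, _, rfl⟩
      exact ⟨B, ⟨hB, interlift A B hne⟩, rfl⟩
    exact ((hωstar A hA).image p).subset hsub
  · intro M' hM'
    rcases memω' M' hM' with ⟨M, hM, _, rfl⟩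
    have key : ∀ N', Enchained ω' (p M) N' → N' ∈ ω' →
        ∃ N ∈ ω, N' = p N ∧ Enchained ω M N := by
      intro N' h
      induction h with
      | refl => exact fun _ => ⟨M, hM, rfl, Relation.ReflTransGen.refl⟩
      | tail hab hstep ih =>
        intro _
        obtain ⟨hbm, hcm, hne⟩ := hstep
        rcases ih hbm with ⟨N, hN, rfl, hench⟩
        rcases memω' _ hcm with ⟨P, hP, _, rfl⟩
        exact ⟨P, hP, rfl, hench.tail ⟨hN, hP, interlift N P hne⟩⟩
    have hsub : Component ω' (p M) ⊆ p '' Component ω M := by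
      rintro N' ⟨hN', hench⟩
      rcases key N' hench hN' with ⟨N, hN, rfl, he⟩
      exact ⟨N, ⟨hN, he⟩, rfl⟩
    exact ((hωcomp M hM).image p).subset hsub
  · intro A' hA'
    rcases memω' A' hA' with ⟨A, hA, hAne, rfl⟩
    rcases hωref A hA with ⟨W, hW, hAW⟩
    rcases hW with ⟨U, hU, rfl⟩ | rfl
    · refine ⟨U, hU, ?_⟩
      rw [hVeq U hU]
      exact fun z hz => hAW hz
    · rcases hAne with ⟨z, hz⟩
      exact absurd z.2 (hAW hz)
end

section
/- If f : X → Y is a perfect map (continuous, closed, with compact fibers) from a Hausdorff space X onto a space Y, and Y is superparacompact, then X is superparacompact. -/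
open Set Relation TopologicalSpace

/-- If a Hausdorff space admits a perfect map onto a superparacompact space,
then it is superparacompact. -/
theorem superparacompact_of_perfect_map {X Y : Type*} [TopologicalSpace X]
    [TopologicalSpace Y] [T2Space X]
    (f : X → Y) (hc : Continuous f) (hcl : IsClosedMap f)
    (hfib : ∀ y : Y, IsCompact (f ⁻¹' {y})) (hsurj : Function.Surjective f)
    (hY : Superparacompact Y) :
    Superparacompact X := by
  rcases isEmpty_or_nonempty Y with hE | hNE
  · have hXe : IsEmpty X := ⟨fun x => hE.false (f x)⟩
    intro 𝒰 _ _
    refine ⟨∅, ⟨by simp, ?_, by simp, by simp⟩, by simp⟩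
    ext x; exact hXe.elim x
  intro 𝒰 hUopen hUcov
  -- finite subcover of each fiber
  have key : ∀ y : Y, ∃ t : Set (Set X), t.Finite ∧ t ⊆ 𝒰 ∧ f ⁻¹' {y} ⊆ ⋃₀ t := by
    intro y
    have hcover : f ⁻¹' {y} ⊆ ⋃ u : 𝒰, (u : Set X) := by
      intro x _
      have hx : x ∈ ⋃₀ 𝒰 := by rw [hUcov]; trivial
      obtain ⟨U, hU, hxU⟩ := hx
      exact mem_iUnion.2 ⟨⟨U, hU⟩, hxU⟩
    obtain ⟨s, hs⟩ := (hfib y).elim_finite_subcover (fun u : 𝒰 => (u : Set X))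
      (fun u => hUopen u u.2) hcover
    refine ⟨(fun u : 𝒰 => (u : Set X)) '' s, s.finite_toSet.image _, ?_, ?_⟩
    · rintro _ ⟨u, _, rfl⟩; exact u.2
    · intro x hx
      obtain ⟨u, hu, hxu⟩ := mem_iUnion₂.1 (hs hx)
      exact ⟨u, ⟨u, hu, rfl⟩, hxu⟩
  choose t ht_fin ht_sub ht_cov using key
  -- the tube neighborhoods
  set V : Y → Set Y := fun y => (f '' (⋃₀ t y)ᶜ)ᶜ with hVdef
  have htopen : ∀ y, IsOpen (⋃₀ t y) := fun y =>
    isOpen_sUnion (fun s hs => hUopen s (ht_sub y hs))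
  have hVopen : ∀ y, IsOpen (V y) := fun y =>
    (hcl _ (htopen y).isClosed_compl).isOpen_compl
  have hVmem : ∀ y, y ∈ V y := by
    intro y hy
    obtain ⟨x, hx, hfx⟩ := hy
    exact hx (ht_cov y (by simp [hfx]))
  have hVpre : ∀ y, f ⁻¹' V y ⊆ ⋃₀ t y := by
    intro y x hx
    by_contra h
    exact hx ⟨x, h, rfl⟩
  -- apply superparacompactness of Y
  obtain ⟨ω, hωfc, hωref⟩ := hY (Set.range V)
    (by rintro _ ⟨y, rfl⟩; exact hVopen y)
    (by
      ext y; simp only [mem_sUnion, mem_univ, iff_true]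
      exact ⟨V y, ⟨y, rfl⟩, hVmem y⟩)
  obtain ⟨hωopen, hωcov, hωstar, hωcomp⟩ := hωfc
  have hyA : ∀ A ∈ ω, ∃ y, A ⊆ V y := by
    intro A hA
    obtain ⟨U, ⟨y, rfl⟩, hAU⟩ := hωref A hA
    exact ⟨y, hAU⟩
  choose! yA hyAsub using hyA
  set G : Set Y → Set (Set X) := fun A => t (yA A) with hGdef
  have hGfin : ∀ A, (G A).Finite := fun A => ht_fin (yA A)
  have hGsub : ∀ A, G A ⊆ 𝒰 := fun A => ht_sub (yA A)
  have hGcov : ∀ A ∈ ω, f ⁻¹' A ⊆ ⋃₀ G A := by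
    intro A hA x hx
    exact hVpre (yA A) (hyAsub A hA hx)
  -- the pulled-back cover
  set ω' : Set (Set X) :=
    {P | ∃ A, A ∈ ω ∧ ∃ U, U ∈ G A ∧ P.Nonempty ∧ P = f ⁻¹' A ∩ U} with hω'def
  have hdef : ∀ P ∈ ω', ∃ A, A ∈ ω ∧ ∃ U, U ∈ G A ∧ P.Nonempty ∧ P = f ⁻¹' A ∩ U :=
    fun P hP => hP
  choose! g hgω u hu hne hPeq using hdef
  -- projecting chains
  have hstep : ∀ P Q, ChainStep ω' P Q → ChainStep ω (g P) (g Q) := by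
    rintro P Q ⟨hP, hQ, x, hxP, hxQ⟩
    refine ⟨hgω P hP, hgω Q hQ, f x, ?_, ?_⟩
    · have := hPeq P hP ▸ hxP; exact this.1
    · have := hPeq Q hQ ▸ hxQ; exact this.1
  have henchain : ∀ P Q, P ∈ ω' → Enchained ω' P Q → Enchained ω (g P) (g Q) := by
    intro P Q hP h
    induction h with
    | refl => exact ReflTransGen.refl
    | tail _ hbc ih => exact ReflTransGen.tail ih (hstep _ _ hbc)
  refine ⟨ω', ⟨?_, ?_, ?_, ?_⟩, ?_⟩
  · -- open
    intro P hP
    rw [hPeq P hP]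
    exact ((hωopen _ (hgω P hP)).preimage hc).inter
      (hUopen _ (hGsub (g P) (hu P hP)))
  · -- covers
    ext x; simp only [mem_univ, iff_true, mem_sUnion]
    have hfx : f x ∈ ⋃₀ ω := by rw [hωcov]; trivial
    obtain ⟨A, hA, hfxA⟩ := hfx
    obtain ⟨U, hU, hxU⟩ := hGcov A hA hfxA
    exact ⟨f ⁻¹' A ∩ U, ⟨A, hA, U, hU, ⟨x, hfxA, hxU⟩, rfl⟩, hfxA, hxU⟩
  · -- star-finite
    intro P hP
    have hSfin : {B ∈ ω | (g P ∩ B).Nonempty}.Finite := hωstar _ (hgω P hP)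
    apply Set.Finite.subset
      (hSfin.biUnion (fun B _ => (hGfin B).image (fun U => f ⁻¹' B ∩ U)))
    rintro Q ⟨hQ, x, hxP, hxQ⟩
    refine mem_biUnion ⟨hgω Q hQ, f x, ?_, ?_⟩ ⟨u Q, hu Q hQ, (hPeq Q hQ).symm⟩
    · have := hPeq P hP ▸ hxP; exact this.1
    · have := hPeq Q hQ ▸ hxQ; exact this.1
  · -- finite components
    intro M hM
    have hCfin : (Component ω (g M)).Finite := hωcomp _ (hgω M hM)
    apply Set.Finite.subset
      (hCfin.biUnion (fun B _ => (hGfin B).image (fun U => f ⁻¹' B ∩ U)))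
    rintro N ⟨hN, hench⟩
    exact mem_biUnion ⟨hgω N hN, henchain M N hM hench⟩
      ⟨u N, hu N hN, (hPeq N hN).symm⟩
  · -- refines 𝒰
    intro P hP
    refine ⟨u P, hGsub (g P) (hu P hP), fun x hx => ?_⟩
    have hx' : x ∈ f ⁻¹' g P ∩ u P := hPeq P hP ▸ hx
    exact hx'.2
end

section
/- The product K × B of a compact Hausdorff space K with a topological space B that has a base of clopen sets partitioning refinements (e.g., the generalized Baire space B(τ) = (discrete space of cardinality τ)^ℕ) is superparacompact. -/
open Set Relation TopologicalSpace

/-- The product of a compact Hausdorff space with a (Hausdorff) space in which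
every open cover admits a refinement by a partition into clopen sets (e.g. the
generalized Baire space B(τ)) is superparacompact. -/
theorem superparacompact_prod_compact {K B : Type*} [TopologicalSpace K]
    [CompactSpace K] [T2Space K] [TopologicalSpace B] [T2Space B]
    (hB : ∀ 𝒰 : Set (Set B), (∀ U ∈ 𝒰, IsOpen U) → ⋃₀ 𝒰 = Set.univ →
      ∃ 𝒞 : Set (Set B), (∀ C ∈ 𝒞, IsClopen C) ∧ ⋃₀ 𝒞 = Set.univ ∧
        𝒞.PairwiseDisjoint id ∧ ∀ C ∈ 𝒞, ∃ U ∈ 𝒰, C ⊆ U) :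
    Superparacompact (K × B) := by
  classical
  intro 𝒰 hUo hUcov
  rcases isEmpty_or_nonempty B with hBe | hBne
  · refine ⟨∅, ⟨by simp, ?_, by simp, by simp⟩, by simp⟩
    simp [Set.univ_eq_empty_iff.mpr inferInstance]
  -- Step 1: tube lemma around each b
  have step1 : ∀ b : B, ∃ (V : Set B) (S : Finset (Set K)), IsOpen V ∧ b ∈ V ∧
      (∀ A ∈ S, IsOpen A ∧ ∃ U ∈ 𝒰, A ×ˢ V ⊆ U) ∧ (∀ k : K, ∃ A ∈ S, k ∈ A) := by
    intro b
    have h1 : ∀ k : K, ∃ A : Set K, ∃ W : Set B, IsOpen A ∧ IsOpen W ∧ k ∈ A ∧ b ∈ W ∧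
        ∃ U ∈ 𝒰, A ×ˢ W ⊆ U := by
      intro k
      have hm : (k, b) ∈ ⋃₀ 𝒰 := by rw [hUcov]; trivial
      obtain ⟨U, hU, hkb⟩ := hm
      obtain ⟨A, W, hA, hW, hk, hb, hsub⟩ := isOpen_prod_iff.mp (hUo U hU) k b hkb
      exact ⟨A, W, hA, hW, hk, hb, U, hU, hsub⟩
    choose A W hA hW hk hb U hU hsub using h1
    obtain ⟨t, ht⟩ := IsCompact.elim_finite_subcover isCompact_univ A hA
      (fun k _ => Set.mem_iUnion.mpr ⟨k, hk k⟩)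
    refine ⟨⋂ k ∈ t, W k, t.image A, isOpen_biInter_finset (fun k _ => hW k),
      Set.mem_iInter₂.mpr fun k _ => hb k, ?_, ?_⟩
    · intro A' hA'
      obtain ⟨k, hkt, rfl⟩ := Finset.mem_image.mp hA'
      refine ⟨hA k, U k, hU k, Set.Subset.trans ?_ (hsub k)⟩
      exact Set.prod_mono Set.Subset.rfl (Set.biInter_subset_of_mem hkt)
    · intro k0
      obtain ⟨k, hkt, hk0⟩ := Set.mem_iUnion₂.mp (ht (Set.mem_univ k0))
      exact ⟨A k, Finset.mem_image_of_mem A hkt, hk0⟩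
  choose V S hVo hVb hS hScov using step1
  -- apply hB to the cover by the V b's
  obtain ⟨𝒞, hCcl, hCcov, hCdisj, hCref⟩ := hB (Set.range V)
    (by rintro _ ⟨b, rfl⟩; exact hVo b)
    (by
      apply Set.eq_univ_of_forall
      intro b
      exact ⟨V b, ⟨b, rfl⟩, hVb b⟩)
  have href : ∀ C ∈ 𝒞, ∃ b : B, C ⊆ V b := by
    intro C hC
    obtain ⟨U, ⟨b, rfl⟩, hsub⟩ := hCref C hC
    exact ⟨b, hsub⟩
  choose! f hf using href
  -- the refinement
  set ω : Set (Set (K × B)) :=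
    {P | ∃ C ∈ 𝒞, ∃ A ∈ S (f C), P = A ×ˢ C} with hω
  set T : Set B → Set (Set (K × B)) := fun C => (fun A => A ×ˢ C) '' ↑(S (f C)) with hT
  have hTfin : ∀ C, (T C).Finite := fun C => ((S (f C)).finite_toSet).image _
  have hCC : ∀ C ∈ 𝒞, ∀ C' ∈ 𝒞, (C ∩ C').Nonempty → C = C' := by
    intro C hC C' hC' hne
    by_contra hne'
    exact hne.not_subset_empty (Set.disjoint_iff.mp (hCdisj hC hC' hne'))
  have hsnd : ∀ (A A' : Set K) (C C' : Set B), (A ×ˢ C).Nonempty →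
      A ×ˢ C = A' ×ˢ C' → C = C' := by
    intro A A' C C' hne heq
    have h1 := Set.snd_image_prod ((Set.prod_nonempty_iff.mp hne).1) C
    have hne' : (A' ×ˢ C').Nonempty := heq ▸ hne
    have h2 := Set.snd_image_prod ((Set.prod_nonempty_iff.mp hne').1) C'
    rw [← h1, ← h2, heq]
  -- if P nonempty and P ∈ ω with P = A ×ˢ C, C ∈ 𝒞 then its representation is in T C
  have hrep : ∀ (A : Set K) (C : Set B), C ∈ 𝒞 → (A ×ˢ C).Nonempty →
      (A ×ˢ C) ∈ ω → (A ×ˢ C) ∈ T C := by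
    intro A C hC hne hmem
    obtain ⟨C', hC', A', hA', heq⟩ := hmem
    have hCeq : C = C' := hsnd A A' C C' hne heq
    subst hCeq
    exact ⟨A', hA', heq.symm⟩
  have hstep : ∀ (C : Set B), C ∈ 𝒞 → ∀ P ∈ T C, ∀ Q ∈ ω, (P ∩ Q).Nonempty → Q ∈ T C := by
    rintro C hC P ⟨A, hA, rfl⟩ Q ⟨C', hC', A', hA', rfl⟩ hne
    obtain ⟨⟨k, b⟩, ⟨hk1, hb1⟩, hk2, hb2⟩ := hne
    have : C = C' := hCC C hC C' hC' ⟨b, hb1, hb2⟩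
    subst this
    exact ⟨A', hA', rfl⟩
  refine ⟨ω, ⟨?_, ?_, ?_, ?_⟩, ?_⟩
  · rintro _ ⟨C, hC, A, hA, rfl⟩
    exact (hS (f C) A hA).1.prod (hCcl C hC).isOpen
  · apply Set.eq_univ_of_forall
    rintro ⟨k, b⟩
    have hb : b ∈ ⋃₀ 𝒞 := by rw [hCcov]; trivial
    obtain ⟨C, hC, hbC⟩ := hb
    obtain ⟨A, hA, hkA⟩ := hScov (f C) k
    exact ⟨A ×ˢ C, ⟨C, hC, A, hA, rfl⟩, hkA, hbC⟩
  · rintro P hP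
    rcases Set.eq_empty_or_nonempty P with rfl | hne
    · convert Set.finite_empty
      ext Q
      simp
    · obtain ⟨C, hC, A, hA, rfl⟩ := hP
      apply (hTfin C).subset
      rintro Q ⟨hQω, hQne⟩
      exact hstep C hC _ (hrep A C hC hne ⟨C, hC, A, hA, rfl⟩) Q hQω hQne
  · rintro P hP
    rcases Set.eq_empty_or_nonempty P with rfl | hne
    · apply (Set.finite_singleton (∅ : Set (K × B))).subset
      rintro Q ⟨hQω, hch⟩
      clear hQω
      induction hch with
      | refl => rfl
      | tail _ hs ih =>
        exfalso
        have hbemp := Set.mem_singleton_iff.mp ih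
        rw [hbemp] at hs
        simpa using hs.2.2
    · obtain ⟨C, hC, A, hA, rfl⟩ := hP
      apply (hTfin C).subset
      rintro Q ⟨hQω, hch⟩
      clear hQω
      induction hch with
      | refl => exact hrep A C hC hne ⟨C, hC, A, hA, rfl⟩
      | tail _ hs ih =>
        exact hstep C hC _ ih _ hs.2.1 hs.2.2
  · rintro _ ⟨C, hC, A, hA, rfl⟩
    obtain ⟨hAo, U, hU, hsub⟩ := hS (f C) A hA
    exact ⟨U, hU, Set.Subset.trans (Set.prod_mono Set.Subset.rfl (hf C hC)) hsub⟩
end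

section
/- Every 0-dimensional (dim X = 0, equivalently every finite open cover admits a disjoint clopen refinement) completely metrizable space of weight at most τ embeds as a closed subspace of the generalized Baire space B(τ) of weight τ. -/
open Set Topology TopologicalSpace Cardinal Metric Filter

universe u

section Aux

variable {X : Type u} [MetricSpace X]

/-- Clopen separation of disjoint closed sets, from the dim = 0 hypothesis. -/
lemma aux_clopen_sep
    (hdim : ∀ 𝒰 : Set (Set X), 𝒰.Finite → (∀ U ∈ 𝒰, IsOpen U) → ⋃₀ 𝒰 = Set.univ →
      ∃ 𝒞 : Set (Set X), (∀ C ∈ 𝒞, IsClopen C) ∧ ⋃₀ 𝒞 = Set.univ ∧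
        𝒞.PairwiseDisjoint id ∧ ∀ C ∈ 𝒞, ∃ U ∈ 𝒰, C ⊆ U)
    {A B : Set X} (hA : IsClosed A) (hB : IsClosed B) (hAB : Disjoint A B) :
    ∃ H : Set X, IsClopen H ∧ A ⊆ H ∧ Disjoint H B := by
  have hcov : ⋃₀ ({Aᶜ, Bᶜ} : Set (Set X)) = Set.univ := by
    rw [Set.sUnion_pair, ← Set.compl_inter]
    rw [Set.disjoint_iff_inter_eq_empty] at hAB
    rw [hAB, Set.compl_empty]
  obtain ⟨𝒞, hcl, hU, hdisj, href⟩ := hdim {Aᶜ, Bᶜ}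
    ((Set.finite_singleton _).insert _)
    (by rintro U (rfl | rfl)
        exacts [hA.isOpen_compl, hB.isOpen_compl]) hcov
  refine ⟨⋃₀ {C | C ∈ 𝒞 ∧ Disjoint C B}, ⟨?_, ?_⟩, ?_, ?_⟩
  · -- closed
    rw [← isOpen_compl_iff]
    rw [isOpen_iff_forall_mem_open]
    intro x hx
    have hxU : x ∈ ⋃₀ 𝒞 := hU ▸ Set.mem_univ x
    obtain ⟨C₀, hC₀, hxC₀⟩ := hxU
    have hC₀B : ¬ Disjoint C₀ B := by
      intro h
      exact hx ⟨C₀, ⟨hC₀, h⟩, hxC₀⟩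
    refine ⟨C₀, ?_, (hcl C₀ hC₀).isOpen, hxC₀⟩
    intro y hy hy2
    obtain ⟨C', ⟨hC', hC'B⟩, hyC'⟩ := hy2
    have hne : C₀ ≠ C' := by rintro rfl; exact hC₀B hC'B
    exact Set.disjoint_left.1 (hdisj hC₀ hC' hne) hy hyC'
  · exact isOpen_sUnion fun C hC => (hcl C hC.1).isOpen
  · -- A ⊆ H
    intro a ha
    have haU : a ∈ ⋃₀ 𝒞 := hU ▸ Set.mem_univ a
    obtain ⟨C, hC, haC⟩ := haU
    obtain ⟨U, hUmem, hCU⟩ := href C hC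
    rcases hUmem with rfl | rfl
    · exact absurd (hCU haC) (by simpa using ha)
    · exact ⟨C, ⟨hC, Set.subset_compl_iff_disjoint_right.1 hCU⟩, haC⟩
  · -- Disjoint H B
    rw [Set.disjoint_sUnion_left]
    exact fun C hC => hC.2

/-- Partition of the space into clopen sets, each contained in a `δ`-ball. -/
lemma aux_partition
    (hsep : ∀ A B : Set X, IsClosed A → IsClosed B → Disjoint A B →
      ∃ H : Set X, IsClopen H ∧ A ⊆ H ∧ Disjoint H B)
    {δ : ℝ} (hδ : 0 < δ) :
    ∃ E : X → Set X, (∀ i, IsClopen (E i)) ∧ (∀ i, E i ⊆ Metric.ball i δ) ∧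
      Pairwise (Function.onFun Disjoint E) ∧ (⋃ i, E i) = Set.univ := by
  obtain ⟨v, vo, vU, vlf, vb⟩ := precise_refinement (fun i : X => Metric.ball i δ)
    (fun i => Metric.isOpen_ball)
    (Set.iUnion_eq_univ_iff.2 fun x => ⟨x, Metric.mem_ball_self hδ⟩)
  obtain ⟨w, wU, wo, hw⟩ := exists_iUnion_eq_closure_subset vo
    (fun x => (vlf.point_finite x)) vU
  have hdisj : ∀ i, Disjoint (closure (w i)) (v i)ᶜ := fun i =>
    Set.disjoint_left.2 fun x hx h2 => h2 (hw i hx)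
  choose H Hcl HsubA Hdis using fun i =>
    hsep (closure (w i)) (v i)ᶜ isClosed_closure (vo i).isClosed_compl (hdisj i)
  have Hsub : ∀ i, H i ⊆ v i := fun i x hx =>
    Set.notMem_compl_iff.1 (Set.disjoint_left.1 (Hdis i) hx)
  have Hlf : LocallyFinite H := vlf.subset Hsub
  classical
  let r : X → X → Prop := WellOrderingRel
  have hwf : WellFounded r := (WellOrderingRel.isWellOrder).toIsWellFounded.wf
  set E : X → Set X := fun i => H i \ ⋃ j : {j // r j i}, H (j : X) with hE
  have hUclopen : ∀ i, IsClopen (⋃ j : {j // r j i}, H (j : X)) := fun i =>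
    ⟨(Hlf.comp_injective Subtype.val_injective).isClosed_iUnion
        (fun j => (Hcl (j : X)).isClosed),
      isOpen_iUnion fun j => (Hcl (j : X)).isOpen⟩
  refine ⟨E, ?_, ?_, ?_, ?_⟩
  · exact fun i => (Hcl i).diff (hUclopen i)
  · exact fun i => (Set.diff_subset.trans (Hsub i)).trans (vb i)
  · intro i j hij
    have htri := trichotomous_of r i j
    rcases htri with h | h | h
    · -- r i j : E j avoids H i
      refine Set.disjoint_left.2 fun x hx hx2 => ?_
      exact hx2.2 (Set.mem_iUnion.2 ⟨⟨i, h⟩, hx.1⟩)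
    · exact absurd h hij
    · refine Set.disjoint_left.2 fun x hx hx2 => ?_
      exact hx.2 (Set.mem_iUnion.2 ⟨⟨j, h⟩, hx2.1⟩)
  · rw [Set.eq_univ_iff_forall]
    intro x
    have hxT : ∃ i, x ∈ H i := by
      have : x ∈ ⋃ i, w i := wU ▸ Set.mem_univ x
      obtain ⟨i, hi⟩ := Set.mem_iUnion.1 this
      exact ⟨i, HsubA i (subset_closure hi)⟩
    set T : Set X := {i | x ∈ H i} with hT
    have hTne : T.Nonempty := hxT
    refine Set.mem_iUnion.2 ⟨hwf.min T hTne, hwf.min_mem T hTne, ?_⟩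
    intro hmem
    obtain ⟨⟨j, hj⟩, hxj⟩ := Set.mem_iUnion.1 hmem
    exact hwf.not_lt_min T hxj hj

end Aux

/-- Every 0-dimensional completely metrizable space of weight at most τ embeds
as a closed subspace of the generalized Baire space B(τ) = D(τ)^ℕ. -/
theorem closed_embedding_into_baire (τ : Cardinal.{u}) (hτ : Cardinal.aleph0 ≤ τ)
    {X : Type u} [MetricSpace X] [CompleteSpace X]
    (hweight : ∃ b : Set (Set X), IsTopologicalBasis b ∧ #b ≤ τ)
    (hdim : ∀ 𝒰 : Set (Set X), 𝒰.Finite → (∀ U ∈ 𝒰, IsOpen U) → ⋃₀ 𝒰 = Set.univ →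
      ∃ 𝒞 : Set (Set X), (∀ C ∈ 𝒞, IsClopen C) ∧ ⋃₀ 𝒞 = Set.univ ∧
        𝒞.PairwiseDisjoint id ∧ ∀ C ∈ 𝒞, ∃ U ∈ 𝒰, C ⊆ U)
    (D : Type u) [TopologicalSpace D] [DiscreteTopology D] (hD : #D = τ) :
    ∃ f : X → (ℕ → D), IsClosedEmbedding f := by
  classical
  obtain ⟨b, hb, hbτ⟩ := hweight
  have hsep : ∀ A B : Set X, IsClosed A → IsClosed B → Disjoint A B →
      ∃ H : Set X, IsClopen H ∧ A ⊆ H ∧ Disjoint H B :=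
    fun A B hA hB hAB => aux_clopen_sep hdim hA hB hAB
  have hpart : ∀ n : ℕ, ∃ E : X → Set X, (∀ i, IsClopen (E i)) ∧
      (∀ i, E i ⊆ Metric.ball i ((1/2 : ℝ)^n / 2)) ∧
      Pairwise (Function.onFun Disjoint E) ∧ (⋃ i, E i) = Set.univ := fun n =>
    aux_partition hsep (by positivity)
  choose E Ecl Esub Edis Ecov using hpart
  -- the index of the piece containing x
  have hmem : ∀ (n : ℕ) (x : X), ∃ i, x ∈ E n i := fun n x =>
    Set.mem_iUnion.1 ((Ecov n) ▸ Set.mem_univ x)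
  choose g hg using hmem
  have huniq : ∀ (n : ℕ) (x : X) (i : X), x ∈ E n i → i = g n x := by
    intro n x i hi
    by_contra h
    exact Set.disjoint_left.1 (Edis n h) hi (hg n x)
  -- cardinality: injection of the nonempty pieces into D
  have hcard : ∀ n : ℕ, ∃ ψ : {i : X // (E n i).Nonempty} → D, Function.Injective ψ := by
    intro n
    have h1 : #{i : X // (E n i).Nonempty} ≤ #b := by
      have hφ : ∀ i : {i : X // (E n i).Nonempty}, ∃ B ∈ b,
          B.Nonempty ∧ B ⊆ E n (i : X) := by
        rintro ⟨i, x, hx⟩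
        obtain ⟨B, hBb, hxB, hBsub⟩ := hb.exists_subset_of_mem_open hx (Ecl n i).isOpen
        exact ⟨B, hBb, ⟨x, hxB⟩, hBsub⟩
      choose B hBb hBne hBsub using hφ
      have hinj : Function.Injective (fun i => (⟨B i, hBb i⟩ : b)) := by
        intro i j hij
        simp only [Subtype.mk.injEq] at hij
        by_contra hne
        have hne' : (i : X) ≠ (j : X) := fun h => hne (Subtype.ext h)
        obtain ⟨x, hx⟩ := hBne i
        exact Set.disjoint_left.1 (Edis n hne') (hBsub i hx)
          (hBsub j (hij ▸ hx))
      exact Cardinal.mk_le_of_injective hinj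
    have h2 : #{i : X // (E n i).Nonempty} ≤ #D := le_of_le_of_eq (h1.trans hbτ) hD.symm
    obtain ⟨ψ⟩ := (Cardinal.le_def _ _).1 h2
    exact ⟨ψ, ψ.injective⟩
  choose ψ hψ using hcard
  set f : X → ℕ → D := fun x n => ψ n ⟨g n x, ⟨x, hg n x⟩⟩ with hf
  -- fiber characterization
  have hfiber : ∀ (n : ℕ) (x y : X), f x n = f y n ↔ y ∈ E n (g n x) := by
    intro n x y
    constructor
    · intro h
      have := hψ n h
      have hval : g n x = g n y := congrArg Subtype.val this
      rw [hval]; exact hg n y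
    · intro h
      have : g n y = g n x := (huniq n y (g n x) h).symm ▸ rfl
      have hgyx : g n x = g n y := (huniq n y (g n x) h)
      simp only [hf]
      congr 1
      exact Subtype.ext hgyx
  have hdist : ∀ (n : ℕ) (x y : X), f x n = f y n → dist x y < (1/2 : ℝ)^n := by
    intro n x y h
    have hy : y ∈ E n (g n x) := (hfiber n x y).1 h
    have hx : x ∈ E n (g n x) := hg n x
    have h1 := Esub n (g n x) hx
    have h2 := Esub n (g n x) hy
    rw [Metric.mem_ball] at h1 h2
    calc dist x y ≤ dist x (g n x) + dist (g n x) y := dist_triangle _ _ _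
      _ < (1/2 : ℝ)^n / 2 + (1/2 : ℝ)^n / 2 := by
          rw [dist_comm (g n x) y]; exact add_lt_add h1 h2
      _ = (1/2 : ℝ)^n := by ring
  have hcont : Continuous f := by
    refine continuous_pi fun n => ?_
    rw [continuous_iff_continuousAt]
    intro x
    have hev : ∀ᶠ y in 𝓝 x, f y n = f x n := by
      filter_upwards [(Ecl n (g n x)).isOpen.mem_nhds (hg n x)] with y hy
      exact ((hfiber n x y).2 hy).symm
    exact continuousAt_const.congr (by filter_upwards [hev] with y hy using hy.symm) |>.congr
      (by filter_upwards [hev] with y hy using rfl)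
  have hinj : Function.Injective f := by
    intro x y hxy
    by_contra hne
    have hd : 0 < dist x y := dist_pos.2 hne
    obtain ⟨n, hn⟩ := exists_pow_lt_of_lt_one hd (by norm_num : (1/2 : ℝ) < 1)
    exact absurd (hdist n x y (congrFun hxy n)) (not_lt.2 hn.le)
  have hind : IsInducing f := by
    rw [isInducing_iff_nhds]
    intro x
    refine le_antisymm ?_ ?_
    · exact (hcont.tendsto x).le_comap
    · intro s hs
      rw [Metric.mem_nhds_iff] at hs
      obtain ⟨ζ, hζ, hball⟩ := hs
      obtain ⟨n, hn⟩ := exists_pow_lt_of_lt_one hζ (by norm_num : (1/2 : ℝ) < 1)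
      have hopen : IsOpen {h : ℕ → D | h n = f x n} := by
        have : IsOpen ((fun h : ℕ → D => h n) ⁻¹' {f x n}) :=
          (isOpen_discrete ({f x n} : Set D)).preimage (continuous_apply n)
        simpa [Set.preimage, Set.mem_singleton_iff] using this
      have hmemn : {h : ℕ → D | h n = f x n} ∈ 𝓝 (f x) :=
        hopen.mem_nhds (by simp)
      refine Filter.mem_of_superset (Filter.preimage_mem_comap hmemn) ?_
      · intro y hy
        have : f x n = f y n := (hy : f y n = f x n).symm
        have hd := hdist n x y this
        apply hball
        rw [Metric.mem_ball, dist_comm]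
        exact hd.trans hn
  have hclosed : IsClosed (Set.range f) := by
    have hseq : IsSeqClosed (Set.range f) := by
      intro u z hu hz
      choose y hy using hu
      have hz' : Filter.Tendsto (fun k => f (y k)) Filter.atTop (𝓝 z) := by
        simpa [hy] using hz
      have hcoord : ∀ n : ℕ, ∀ᶠ k in Filter.atTop, f (y k) n = z n := by
        intro n
        have h1 : Filter.Tendsto (fun k => f (y k) n) Filter.atTop (𝓝 (z n)) :=
          (continuous_apply n).continuousAt.tendsto.comp hz'
        rw [nhds_discrete, Filter.tendsto_pure] at h1
        exact h1
      have hcauchy : CauchySeq y := by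
        rw [Metric.cauchySeq_iff]
        intro ε hε
        obtain ⟨n, hn⟩ := exists_pow_lt_of_lt_one hε (by norm_num : (1/2 : ℝ) < 1)
        obtain ⟨K, hK⟩ := Filter.eventually_atTop.1 (hcoord n)
        refine ⟨K, fun k hk l hl => ?_⟩
        have h1 : f (y k) n = f (y l) n := by rw [hK k hk, hK l hl]
        exact (hdist n (y k) (y l) h1).trans hn
      obtain ⟨x, hx⟩ := cauchySeq_tendsto_of_complete hcauchy
      have h1 : Filter.Tendsto (fun k => f (y k)) Filter.atTop (𝓝 (f x)) :=
        (hcont.tendsto x).comp hx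
      exact ⟨x, tendsto_nhds_unique h1 hz'⟩
    exact hseq.isClosed
  exact ⟨f, ⟨⟨hind, hinj⟩, hclosed⟩⟩
end

section
/- If f : X → B is a perfect map from a metrizable (hence Tychonoff) space X into a metrizable space B, then there is an embedding g : X → B × Q^∞ into the product of B with the Hilbert cube such that π ∘ g = f, where π is the projection onto B, and this embedding g is a closed embedding. -/
open Set Topology

/-- A perfect map f : X → B between metrizable spaces factors through a closed
embedding g : X → B × Q^∞ with π ∘ g = f. -/
theorem perfect_map_factors_closed_embedding {X B : Type*}
    [MetricSpace X] [MetricSpace B]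
    (f : X → B) (hc : Continuous f) (hcl : IsClosedMap f)
    (hfib : ∀ b : B, IsCompact (f ⁻¹' {b})) :
    ∃ g : X → B × (ℕ → unitInterval),
      IsClosedEmbedding g ∧ Prod.fst ∘ g = f := by
  rcases isEmpty_or_nonempty X with hX | hX
  · refine ⟨fun x => (f x, fun _ => 0), ?_, funext fun x => rfl⟩
    refine IsClosedEmbedding.of_continuous_injective_isClosedMap
      (hc.prodMk continuous_const) (fun a => isEmptyElim a) (fun C _ => ?_)
    rw [Set.eq_empty_of_isEmpty C, Set.image_empty]
    exact isClosed_empty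
  -- f is proper
  have hfp : IsProperMap f :=
    isProperMap_iff_isClosedMap_and_compact_fibers.mpr ⟨hc, hcl, hfib⟩
  -- dense sequences in fibers
  have hpex : ∀ b : B, ∃ p : ℕ → X, ∀ δ : ℝ, 0 < δ →
      f ⁻¹' {b} ⊆ ⋃ i, Metric.ball (p i) δ := by
    intro b
    rcases Set.eq_empty_or_nonempty (f ⁻¹' {b}) with hK | hK
    · exact ⟨fun _ => Classical.arbitrary X, fun δ _ => by simp [hK]⟩
    · obtain ⟨c, hcc, hcsub⟩ := (hfib b).isSeparable
      have hcne : c.Nonempty := by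
        rcases hK with ⟨x, hx⟩
        by_contra hemp
        rw [Set.not_nonempty_iff_eq_empty] at hemp
        simpa [hemp] using hcsub hx
      obtain ⟨p, hprange⟩ := hcc.exists_eq_range hcne
      refine ⟨p, fun δ hδ x hx => ?_⟩
      have hxcl : x ∈ closure (Set.range p) := by rw [← hprange]; exact hcsub hx
      rw [Metric.mem_closure_iff] at hxcl
      obtain ⟨y, ⟨i, rfl⟩, hy⟩ := hxcl δ hδ
      exact Set.mem_iUnion.mpr ⟨i, Metric.mem_ball.mpr hy⟩
  choose p hp using hpex
  -- the open sets O b n around fibers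
  set O : B → ℕ → Set X := fun b n => ⋃ i, Metric.ball (p b i) ((1/2 : ℝ) ^ n) with hO
  have hOopen : ∀ b n, IsOpen (O b n) := fun b n => isOpen_iUnion fun i => Metric.isOpen_ball
  have hKO : ∀ b n, f ⁻¹' {b} ⊆ O b n := fun b n => hp b _ (by positivity)
  -- shrink to open sets in B
  set W : B → ℕ → Set B := fun b n => (f '' (O b n)ᶜ)ᶜ with hW
  have hWopen : ∀ b n, IsOpen (W b n) :=
    fun b n => (hcl _ (hOopen b n).isClosed_compl).isOpen_compl
  have hbW : ∀ b n, b ∈ W b n := by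
    intro b n
    rintro ⟨z, hz, hfz⟩
    exact hz (hKO b n hfz)
  have hWsub : ∀ b n, f ⁻¹' (W b n) ⊆ O b n := by
    intro b n x hx
    by_contra hxO
    exact hx ⟨x, hxO, rfl⟩
  -- well-ordering of B
  have wf : WellFounded (WellOrderingRel : B → B → Prop) :=
    WellOrderingRel.isWellOrder.toIsWellFounded.wf
  have hSne : ∀ n (b : B), {β | b ∈ W β n}.Nonempty := fun n b => ⟨b, hbW b n⟩
  set α : ℕ → B → B := fun n b => wf.min {β | b ∈ W β n} (hSne n b) with hαdef
  have hα1 : ∀ n b, b ∈ W (α n b) n := fun n b => wf.min_mem _ (hSne n b)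
  have hα2 : ∀ n b β, b ∈ W β n → ¬ WellOrderingRel β (α n b) :=
    fun n b β hβ => wf.not_lt_min {β | b ∈ W β n} hβ
  -- the centers and the σ-discrete refinement
  set Cent : ℕ → ℕ → B → Set B := fun n m β =>
    {c | α n c = β ∧ Metric.ball c (3 * (1/2 : ℝ) ^ m) ⊆ W β n} with hCentdef
  set D : ℕ → ℕ → B → Set B := fun n m β =>
    ⋃ c ∈ Cent n m β, Metric.ball c ((1/2 : ℝ) ^ m) with hDdef
  have hDopen : ∀ n m β, IsOpen (D n m β) :=
    fun n m β => isOpen_biUnion fun _ _ => Metric.isOpen_ball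
  have hDW : ∀ n m β, D n m β ⊆ W β n := by
    intro n m β b hb
    obtain ⟨cc, hcc, hbmem⟩ := Set.mem_iUnion₂.mp hb
    refine hcc.2 ?_
    have : ((1:ℝ)/2) ^ m ≤ 3 * (1/2 : ℝ) ^ m := by nlinarith [pow_pos (by norm_num : (0:ℝ) < 1/2) m]
    exact Metric.ball_subset_ball this hbmem
  -- distinct pieces at the same level are disjoint
  have hDdisj : ∀ n m β β', β ≠ β' → ∀ b, b ∈ D n m β → b ∈ D n m β' → False := by
    intro n m β β' hne b hb hb'
    obtain ⟨c₁, hc₁, hb₁⟩ := Set.mem_iUnion₂.mp hb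
    obtain ⟨c₂, hc₂, hb₂⟩ := Set.mem_iUnion₂.mp hb'
    rw [Metric.mem_ball] at hb₁ hb₂
    have hd : dist c₂ c₁ < 3 * (1/2 : ℝ) ^ m := by
      have := dist_triangle c₂ b c₁
      rw [dist_comm c₂ b] at this
      nlinarith [pow_pos (by norm_num : (0:ℝ) < 1/2) m]
    have hd' : dist c₁ c₂ < 3 * (1/2 : ℝ) ^ m := by rw [dist_comm]; exact hd
    rcases trichotomous_of WellOrderingRel β β' with h | h | h
    · -- β < β' = α n c₂, but c₂ ∈ ball c₁ (3·2⁻ᵐ) ⊆ W β n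
      have hc₂W : c₂ ∈ W β n := hc₁.2 (Metric.mem_ball.mpr hd)
      rw [← hc₂.1] at h
      exact hα2 n c₂ β hc₂W h
    · exact hne h
    · have hc₁W : c₁ ∈ W β' n := hc₂.2 (Metric.mem_ball.mpr hd')
      rw [← hc₁.1] at h
      exact hα2 n c₁ β' hc₁W h
  -- covering
  have hDcover : ∀ n (b : B), ∃ m β, b ∈ D n m β := by
    intro n b
    obtain ⟨ε, hε, hball⟩ := Metric.isOpen_iff.mp (hWopen (α n b) n) b (hα1 n b)
    obtain ⟨m, hm⟩ := exists_pow_lt_of_lt_one (by positivity : (0:ℝ) < ε / 3)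
      (by norm_num : (1:ℝ)/2 < 1)
    refine ⟨m, α n b, Set.mem_iUnion₂.mpr ⟨b, ⟨rfl, ?_⟩, ?_⟩⟩
    · refine subset_trans (Metric.ball_subset_ball ?_) hball
      linarith
    · exact Metric.mem_ball_self (by positivity)
  -- the countable family of open sets in X and functions
  set M : ℕ → ℕ → ℕ → B → Set X := fun n m i β =>
    f ⁻¹' (D n m β) ∩ Metric.ball (p β i) ((1/2 : ℝ) ^ n) with hMdef
  set U : ℕ → ℕ → ℕ → Set X := fun n m i => ⋃ β, M n m i β with hUdef
  have hUopen : ∀ n m i, IsOpen (U n m i) := fun n m i =>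
    isOpen_iUnion fun β => ((hDopen n m β).preimage hc).inter Metric.isOpen_ball
  set u : ℕ → ℕ → ℕ → X → ℝ := fun n m i x => Metric.infDist x (U n m i)ᶜ with hudef
  have hucont : ∀ n m i, Continuous (u n m i) := fun n m i =>
    Metric.continuous_infDist_pt _
  -- assemble the map
  set dec : ℕ ≃ ℕ × ℕ × ℕ := (Denumerable.eqv (ℕ × ℕ × ℕ)).symm with hdec
  set g : X → B × (ℕ → unitInterval) := fun x =>
    (f x, fun k => Set.projIcc (0:ℝ) 1 zero_le_one
      (u (dec k).1 (dec k).2.1 (dec k).2.2 x)) with hgdef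
  have hgcont : Continuous g := by
    refine hc.prodMk (continuous_pi fun k => ?_)
    exact continuous_projIcc.comp (hucont _ _ _)
  -- key separation property
  have hsep : ∀ x y : X, f x = f y → x ≠ y → ∃ n m i,
      u n m i y = 0 ∧ 0 < u n m i x := by
    intro x y hfxy hne
    have hdpos : 0 < dist x y := dist_pos.mpr hne
    obtain ⟨n, hn⟩ := exists_pow_lt_of_lt_one (by positivity : (0:ℝ) < dist x y / 2)
      (by norm_num : (1:ℝ)/2 < 1)
    obtain ⟨m, β, hmem⟩ := hDcover n (f x)
    have hxW : x ∈ f ⁻¹' (W β n) := hDW n m β hmem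
    have hxO : x ∈ O β n := hWsub β n hxW
    obtain ⟨i, hxball⟩ := Set.mem_iUnion.mp hxO
    have hxM : x ∈ M n m i β := ⟨hmem, hxball⟩
    have hxU : x ∈ U n m i := Set.mem_iUnion.mpr ⟨β, hxM⟩
    have hyU : y ∉ U n m i := by
      intro hyU
      obtain ⟨β', hyM⟩ := Set.mem_iUnion.mp hyU
      have hβ' : β' = β := by
        by_contra hne'
        have : f y ∈ D n m β' := hyM.1
        rw [← hfxy] at this
        exact hDdisj n m β' β hne' (f x) this hmem
      rw [hβ'] at hyM
      have h1 : dist x (p β i) < (1/2 : ℝ) ^ n := Metric.mem_ball.mp hxball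
      have h2 : dist y (p β i) < (1/2 : ℝ) ^ n := Metric.mem_ball.mp hyM.2
      have : dist x y < dist x y := by
        calc dist x y ≤ dist x (p β i) + dist (p β i) y := dist_triangle _ _ _
          _ < (1/2:ℝ)^n + (1/2:ℝ)^n := by rw [dist_comm (p β i) y]; exact add_lt_add h1 h2
          _ ≤ dist x y / 2 + dist x y / 2 := add_le_add hn.le hn.le
          _ = dist x y := by ring
      exact lt_irrefl _ this
    refine ⟨n, m, i, Metric.infDist_zero_of_mem hyU, ?_⟩
    rw [hudef]
    refine (IsClosed.notMem_iff_infDist_pos (hUopen n m i).isClosed_compl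
      ⟨y, hyU⟩).mp ?_
    simpa using hxU
  -- injectivity
  have hginj : Function.Injective g := by
    intro x y hxy
    have hfxy : f x = f y := congrArg Prod.fst hxy
    by_contra hne
    obtain ⟨n, m, i, hy0, hxpos⟩ := hsep x y hfxy hne
    have hk := congrFun (congrArg Prod.snd hxy) (dec.symm (n, m, i))
    simp only [hgdef, Equiv.apply_symm_apply] at hk
    have hval := congrArg Subtype.val hk
    rw [Set.coe_projIcc, Set.coe_projIcc, hy0] at hval
    have : max 0 (min 1 (u n m i x)) > 0 := by
      have : 0 < min 1 (u n m i x) := lt_min one_pos hxpos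
      exact lt_max_of_lt_right this
    rw [hval] at this
    simp at this
  -- g is proper, hence a closed map
  have hgproper : IsProperMap g := by
    refine isProperMap_of_comp_of_t2 hgcont continuous_fst ?_
    have : Prod.fst ∘ g = f := rfl
    rw [this]
    exact hfp
  exact ⟨g, IsClosedEmbedding.of_continuous_injective_isClosedMap hgcont hginj
    hgproper.isClosedMap, rfl⟩
end

section
/- A metrizable space X is superparacompact, completely metrizable, and of weight ≤ τ if and only if X is homeomorphic to a closed subspace of B(τ) × Q^∞, where B(τ) is the generalized Baire space of weight τ and Q^∞ is the Hilbert cube (τ ≥ ℵ₀). -/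
open Set Relation TopologicalSpace

open Topology Cardinal Metric Filter


universe u

noncomputable section AuxSuper
/-- If `S` contains `M` and is closed under taking intersecting members of `ω`,
then the component of `M` is contained in `S`. -/
lemma component_subset {X : Type*} {ω S : Set (Set X)} {M : Set X}
    (hM : M ∈ S) (hS : ∀ A ∈ S, ∀ B ∈ ω, (A ∩ B).Nonempty → B ∈ S) :
    Component ω M ⊆ S := by
  rintro N ⟨hN, hE⟩
  clear hN
  induction hE with
  | refl => exact hM
  | tail _h step ih => exact hS _ ih _ step.2.1 step.2.2

section Cyl
variable {D : Type*} [TopologicalSpace D] [DiscreteTopology D]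

/-- cylinder of length `n` around `s` -/
def cyl (s : ℕ → D) (n : ℕ) : Set (ℕ → D) := {u | ∀ i < n, u i = s i}

lemma self_mem_cyl (s : ℕ → D) (n : ℕ) : s ∈ cyl s n := fun _ _ => rfl

lemma cyl_anti (s : ℕ → D) {n m : ℕ} (h : n ≤ m) : cyl s m ⊆ cyl s n :=
  fun _ hu i hi => hu i (lt_of_lt_of_le hi h)

lemma cyl_eq_of_agree {s t : ℕ → D} {n : ℕ} (h : ∀ i < n, s i = t i) : cyl s n = cyl t n := by
  ext u; exact ⟨fun hu i hi => (hu i hi).trans (h i hi), fun hu i hi => (hu i hi).trans (h i hi).symm⟩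

lemma mem_cyl_symm {s t : ℕ → D} {n : ℕ} (h : t ∈ cyl s n) : cyl t n = cyl s n :=
  cyl_eq_of_agree (fun i hi => (h i hi))

lemma isOpen_cyl (s : ℕ → D) (n : ℕ) : IsOpen (cyl s n) := by
  have : cyl s n = ⋂ i ∈ Finset.range n, (fun u : ℕ → D => u i) ⁻¹' {s i} := by
    ext u
    simp [cyl, Finset.mem_range]
  rw [this]
  exact isOpen_biInter_finset fun i _ =>
    (continuous_apply i).isOpen_preimage _ (isOpen_discrete _)

/-- every open nbhd of `s` in the product contains a cylinder -/
lemma exists_cyl_subset {s : ℕ → D} {u : Set (ℕ → D)} (hu : IsOpen u) (hs : s ∈ u) :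
    ∃ n, cyl s n ⊆ u := by
  obtain ⟨I, w, hw, hI⟩ := isOpen_pi_iff.1 hu s hs
  refine ⟨(I.sup id) + 1, fun v hv => hI ?_⟩
  intro i hi
  have : i < I.sup id + 1 := Nat.lt_succ_of_le (Finset.le_sup (f := id) hi)
  rw [hv i this]
  exact (hw i hi).2
end Cyl

section Cod
variable (D : Type*) [TopologicalSpace D] [DiscreteTopology D]

theorem superparacompact_codomain :
    Superparacompact ((ℕ → D) × (ℕ → unitInterval)) := by
  classical
  intro 𝒰 hop hcov
  set Pgood : Set (ℕ → D) → Prop := fun c =>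
    ∃ V : Set (Set (ℕ → unitInterval)), V.Finite ∧ ⋃₀ V = Set.univ ∧
      ∀ v ∈ V, IsOpen v ∧ ∃ U ∈ 𝒰, c ×ˢ v ⊆ U with hPgood
  have hmono : ∀ c c' : Set (ℕ → D), c' ⊆ c → Pgood c → Pgood c' := by
    rintro c c' hsub ⟨V, h1, h2, h3⟩
    exact ⟨V, h1, h2, fun v hv => ⟨(h3 v hv).1, by
      obtain ⟨U, hU, hsubU⟩ := (h3 v hv).2
      exact ⟨U, hU, subset_trans (Set.prod_mono hsub subset_rfl) hsubU⟩⟩⟩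
  have step1 : ∀ s : ℕ → D, ∃ n, Pgood (cyl s n) := by
    intro s
    have hq : ∀ q : ℕ → unitInterval, ∃ (n : ℕ) (v : Set (ℕ → unitInterval)), IsOpen v ∧ q ∈ v ∧
        ∃ U ∈ 𝒰, cyl s n ×ˢ v ⊆ U := by
      intro q
      have : (s, q) ∈ ⋃₀ 𝒰 := hcov ▸ mem_univ _
      obtain ⟨U, hU, hsq⟩ := this
      obtain ⟨u, v, hu, hv, hsu, hqv, hprod⟩ := isOpen_prod_iff.1 (hop U hU) s q hsq
      obtain ⟨n, hn⟩ := exists_cyl_subset hu hsu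
      exact ⟨n, v, hv, hqv, U, hU, subset_trans (Set.prod_mono hn subset_rfl) hprod⟩
    choose nq vq hvo hvq hvU using hq
    obtain ⟨T, hT⟩ := isCompact_univ.elim_finite_subcover vq hvo
      (fun q _ => mem_iUnion.2 ⟨q, hvq q⟩)
    refine ⟨T.sup nq, vq '' T, T.finite_toSet.image _, ?_, ?_⟩
    · apply eq_univ_of_univ_subset
      intro q hq
      have hmem := hT (mem_univ q)
      rw [mem_iUnion₂] at hmem
      obtain ⟨p, hp, hqv⟩ := hmem
      exact ⟨vq p, ⟨p, hp, rfl⟩, hqv⟩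
    · rintro v ⟨p, hp, rfl⟩
      refine ⟨hvo p, ?_⟩
      obtain ⟨U, hU, hsubU⟩ := hvU p
      exact ⟨U, hU, subset_trans
        (Set.prod_mono (cyl_anti s (Finset.le_sup hp)) subset_rfl) hsubU⟩
  set nmin : (ℕ → D) → ℕ := fun s => Nat.find (step1 s) with hnmin
  set cylm : (ℕ → D) → Set (ℕ → D) := fun s => cyl s (nmin s) with hcylm
  have hP : ∀ s, Pgood (cylm s) := fun s => Nat.find_spec (step1 s)
  have hglue : ∀ s t : ℕ → D, (cylm s ∩ cylm t).Nonempty → cylm s = cylm t := by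
    have key : ∀ s t : ℕ → D, nmin s ≤ nmin t → (cylm s ∩ cylm t).Nonempty →
        cylm s = cylm t := by
      rintro s t hle ⟨u, hus, hut⟩
      have hagree : ∀ i < nmin s, t i = s i := fun i hi =>
        ((hut i (lt_of_lt_of_le hi hle)).symm.trans (hus i hi))
      have hcyleq : cyl t (nmin s) = cyl s (nmin s) := cyl_eq_of_agree hagree
      have hle' : nmin t ≤ nmin s := Nat.find_le (by rw [hcyleq]; exact hP s)
      have : nmin t = nmin s := le_antisymm hle' hle
      show cyl s (nmin s) = cyl t (nmin t)
      rw [this, hcyleq]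
    intro s t h
    rcases le_total (nmin s) (nmin t) with hle | hle
    · exact key s t hle h
    · exact (key t s hle (by rwa [inter_comm])).symm
  set 𝒞 : Set (Set (ℕ → D)) := range cylm with h𝒞
  have hPC : ∀ c : 𝒞, Pgood (c : Set (ℕ → D)) := by
    rintro ⟨c, s, rfl⟩
    exact hP s
  choose V hV1 hV2 hV3 using hPC
  have hmeet : ∀ c c' : 𝒞, ((c : Set (ℕ → D)) ∩ (c' : Set (ℕ → D))).Nonempty → c = c' := by
    rintro ⟨c, s, rfl⟩ ⟨c', t, rfl⟩ h
    exact Subtype.ext (hglue s t h)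
  set ω : Set (Set ((ℕ → D) × (ℕ → unitInterval))) :=
    {S | ∃ (c : 𝒞) (v : Set (ℕ → unitInterval)), v ∈ V c ∧ S = (c : Set (ℕ → D)) ×ˢ v} with hω
  have hcylopen : ∀ c : 𝒞, IsOpen (c : Set (ℕ → D)) := by
    rintro ⟨c, s, rfl⟩
    exact isOpen_cyl s _
  refine ⟨ω, ⟨?_, ?_, ?_, ?_⟩, ?_⟩
  · rintro A ⟨c, v, hv, rfl⟩
    exact (hcylopen c).prod (hV3 c v hv).1
  · apply eq_univ_of_univ_subset
    rintro ⟨u, q⟩ -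
    set c : 𝒞 := ⟨cylm u, mem_range_self u⟩ with hc
    have hq : q ∈ ⋃₀ V c := (hV2 c).symm ▸ mem_univ q
    obtain ⟨v, hv, hqv⟩ := hq
    exact ⟨(c : Set (ℕ → D)) ×ˢ v, ⟨c, v, hv, rfl⟩, ⟨self_mem_cyl u _, hqv⟩⟩
  · rintro A ⟨c, v, hv, rfl⟩
    apply ((hV1 c).image (fun v' => (c : Set (ℕ → D)) ×ˢ v')).subset
    rintro B ⟨⟨c', v', hv', rfl⟩, ⟨⟨u, q⟩, ⟨⟨hu1, _⟩, hu2, _⟩⟩⟩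
    have : c = c' := hmeet c c' ⟨u, hu1, hu2⟩
    subst this
    exact ⟨v', hv', rfl⟩
  · rintro M ⟨c, v, hv, rfl⟩
    apply ((hV1 c).image (fun v' => (c : Set (ℕ → D)) ×ˢ v')).subset
    apply component_subset
    · exact ⟨v, hv, rfl⟩
    · rintro A ⟨v₁, hv₁, rfl⟩ B ⟨c', v₂, hv₂, rfl⟩ ⟨⟨u, q⟩, ⟨⟨hu1, _⟩, hu2, _⟩⟩
      have : c = c' := hmeet c c' ⟨u, hu1, hu2⟩
      subst this
      exact ⟨v₂, hv₂, rfl⟩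
  · rintro A ⟨c, v, hv, rfl⟩
    exact (hV3 c v hv).2
end Cod

theorem Superparacompact.pullback {X Y : Type*} [TopologicalSpace X] [TopologicalSpace Y]
    {g : X → Y} (hg : IsClosedEmbedding g) (hY : Superparacompact Y) : Superparacompact X := by
  classical
  intro 𝒰 hop hcov
  have hext : ∀ U ∈ 𝒰, ∃ W : Set Y, IsOpen W ∧ g ⁻¹' W = U := fun U hU =>
    hg.isInducing.isOpen_iff.1 (hop U hU)
  choose! ext hext1 hext2 using hext
  set 𝒱 : Set (Set Y) := (fun U => ext U) '' 𝒰 ∪ {(range g)ᶜ} with h𝒱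
  have hVop : ∀ W ∈ 𝒱, IsOpen W := by
    rintro W (⟨U, hU, rfl⟩ | rfl)
    · exact hext1 U hU
    · exact hg.isClosed_range.isOpen_compl
  have hVcov : ⋃₀ 𝒱 = Set.univ := by
    apply eq_univ_of_univ_subset
    rintro y -
    by_cases hy : y ∈ range g
    · obtain ⟨x, rfl⟩ := hy
      have : x ∈ ⋃₀ 𝒰 := hcov ▸ mem_univ x
      obtain ⟨U, hU, hxU⟩ := this
      refine ⟨ext U, Or.inl ⟨U, hU, rfl⟩, ?_⟩
      rw [← hext2 U hU] at hxU
      exact hxU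
    · exact ⟨(range g)ᶜ, Or.inr rfl, hy⟩
  obtain ⟨ω, ⟨hωop, hωcov, hωstar, hωcomp⟩, hωref⟩ := hY 𝒱 hVop hVcov
  set ω' : Set (Set X) := {S | ∃ W ∈ ω, S = g ⁻¹' W ∧ S.Nonempty} with hω'
  have hpre : ∀ (W W' : Set Y), (g ⁻¹' W ∩ g ⁻¹' W').Nonempty → (W ∩ W').Nonempty := by
    rintro W W' ⟨x, hx1, hx2⟩
    exact ⟨g x, hx1, hx2⟩
  refine ⟨ω', ⟨?_, ?_, ?_, ?_⟩, ?_⟩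
  · rintro A ⟨W, hW, rfl, -⟩
    exact (hωop W hW).preimage hg.continuous
  · apply eq_univ_of_univ_subset
    rintro x -
    have : g x ∈ ⋃₀ ω := hωcov ▸ mem_univ (g x)
    obtain ⟨W, hW, hxW⟩ := this
    exact ⟨g ⁻¹' W, ⟨W, hW, rfl, ⟨x, hxW⟩⟩, hxW⟩
  · rintro A ⟨W, hW, rfl, -⟩
    apply ((hωstar W hW).image (fun W' => g ⁻¹' W')).subset
    rintro B ⟨⟨W', hW', rfl, -⟩, hint⟩
    exact ⟨W', ⟨hW', hpre W W' hint⟩, rfl⟩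
  · rintro M ⟨W, hW, rfl, -⟩
    apply ((hωcomp W hW).image (fun W' => g ⁻¹' W')).subset
    apply component_subset
    · exact ⟨W, ⟨hW, Relation.ReflTransGen.refl⟩, rfl⟩
    · rintro A ⟨W₁, hW₁, rfl⟩ B ⟨W₂, hW₂, rfl, -⟩ hint
      refine ⟨W₂, ⟨hW₂, ?_⟩, rfl⟩
      exact hW₁.2.tail ⟨hW₁.1, hW₂, hpre W₁ W₂ hint⟩
  · rintro A ⟨W, hW, rfl, hne⟩
    obtain ⟨V', hV', hsub⟩ := hωref W hW
    rcases hV' with ⟨U, hU, rfl⟩ | rfl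
    · exact ⟨U, hU, by rw [← hext2 U hU]; exact preimage_mono hsub⟩
    · exfalso
      obtain ⟨x, hx⟩ := hne
      exact hsub hx (mem_range_self x)
noncomputable def discMetric (D : Type*) : MetricSpace D := by
  classical
  exact
  { dist := fun x y => if x = y then 0 else 1
    dist_self := fun x => by simp
    dist_comm := fun x y => by by_cases h : x = y <;> simp [h, eq_comm]
    dist_triangle := fun x y z => by
      by_cases h1 : x = y <;> by_cases h2 : y = z <;> by_cases h3 : x = z <;> simp_all
    eq_of_dist_eq_zero := fun {x y} h => by
      by_contra hne
      simp only [if_neg hne] at h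
      norm_num at h }

section Codomain
variable (D : Type*) [TopologicalSpace D] [DiscreteTopology D]

lemma discMetric_eq_of_dist_lt {D : Type*} {x y : D} (h : (discMetric D).dist x y < 1) : x = y := by
  by_contra hne
  classical
  have h1 : (discMetric D).dist x y = 1 := by
    show (if x = y then (0:ℝ) else 1) = 1
    rw [if_neg hne]
  rw [h1] at h; norm_num at h

lemma discMetric_topology :
    (discMetric D).toUniformSpace.toTopologicalSpace = ‹TopologicalSpace D› := by
  letI m := discMetric D
  have h1 : @DiscreteTopology D m.toUniformSpace.toTopologicalSpace := by
    rw [@discreteTopology_iff_isOpen_singleton D m.toUniformSpace.toTopologicalSpace]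
    intro a
    have : {a} = Metric.ball a 1 := by
      ext y
      simp only [mem_singleton_iff, Metric.mem_ball]
      exact ⟨by rintro rfl; simp, fun h => discMetric_eq_of_dist_lt h⟩
    rw [this]
    exact Metric.isOpen_ball
  rw [@DiscreteTopology.eq_bot D _ h1, DiscreteTopology.eq_bot (α := D)]

lemma discMetric_complete {D : Type*} : @CompleteSpace D (discMetric D).toUniformSpace := by
  letI m := discMetric D
  apply Metric.complete_of_cauchySeq_tendsto
  intro u hu
  obtain ⟨N, hN⟩ := (Metric.cauchySeq_iff'.1 hu) 1 (by norm_num)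
  refine ⟨u N, ?_⟩
  apply Tendsto.congr' (f₁ := fun _ => u N)
  · filter_upwards [eventually_ge_atTop N] with n hn
    exact (discMetric_eq_of_dist_lt (hN n hn)).symm
  · exact tendsto_const_nhds

/-- the metric on the codomain -/
noncomputable def codMetric : MetricSpace ((ℕ → D) × (ℕ → unitInterval)) := by
  letI mD : MetricSpace D := (discMetric D).replaceTopology (discMetric_topology D).symm
  letI m1 : MetricSpace (ℕ → D) := PiCountable.metricSpace
  letI m2 : MetricSpace (ℕ → unitInterval) := PiCountable.metricSpace
  exact Prod.metricSpaceMax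

lemma codMetric_topology :
    (codMetric D).toUniformSpace.toTopologicalSpace
      = (instTopologicalSpaceProd : TopologicalSpace ((ℕ → D) × (ℕ → unitInterval))) := rfl

lemma codMetric_complete : @CompleteSpace _ (codMetric D).toUniformSpace := by
  letI mD : MetricSpace D := (discMetric D).replaceTopology (discMetric_topology D).symm
  letI m1 : MetricSpace (ℕ → D) := PiCountable.metricSpace
  letI m2 : MetricSpace (ℕ → unitInterval) := PiCountable.metricSpace
  haveI cD : CompleteSpace D := by
    have he : mD = discMetric D := MetricSpace.replaceTopology_eq _ _
    show @CompleteSpace D mD.toUniformSpace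
    rw [he]
    exact discMetric_complete
  haveI c1 : CompleteSpace (ℕ → D) := Pi.complete _
  haveI c2 : CompleteSpace (ℕ → unitInterval) := by
    exact Pi.complete _
  exact @CompleteSpace.prod _ _ m1.toUniformSpace m2.toUniformSpace c1 c2
end Codomain

section CylBasis
variable {D : Type*} [TopologicalSpace D] [DiscreteTopology D]
/-- cylinders form a basis -/
lemma isTopologicalBasis_cyl :
    IsTopologicalBasis {c : Set (ℕ → D) | ∃ s n, c = cyl s n} := by
  apply isTopologicalBasis_of_isOpen_of_nhds
  · rintro c ⟨s, n, rfl⟩; exact isOpen_cyl s n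
  · intro a u ha hu
    obtain ⟨n, hn⟩ := exists_cyl_subset hu ha
    exact ⟨cyl a n, ⟨a, n, rfl⟩, self_mem_cyl a n, hn⟩

lemma mk_cylBasis_le (hD : Cardinal.aleph0 ≤ #D) :
    #{c : Set (ℕ → D) | ∃ s n, c = cyl s n} ≤ #D := by
  classical
  haveI : Infinite D := Cardinal.infinite_iff.2 hD
  haveI : Inhabited D := Classical.inhabited_of_nonempty inferInstance
  have hsub : {c : Set (ℕ → D) | ∃ s n, c = cyl s n} ⊆
      range (fun l : List D => cyl (fun i => l.getD i default) l.length) := by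
    rintro c ⟨s, n, rfl⟩
    refine ⟨List.ofFn (fun i : Fin n => s i), ?_⟩
    simp only [List.length_ofFn]
    apply cyl_eq_of_agree
    intro i hi
    rw [List.getD_eq_getElem _ _ (by simpa using hi)]
    simp
  calc #{c : Set (ℕ → D) | ∃ s n, c = cyl s n}
      ≤ #(range (fun l : List D => cyl (fun i => l.getD i default) l.length)) :=
        Cardinal.mk_le_mk_of_subset hsub
    _ ≤ #(List D) := Cardinal.mk_range_le
    _ = #D := Cardinal.mk_list_eq_mk D

end CylBasis


section Reverse
variable {D : Type u} [TopologicalSpace D] [DiscreteTopology D]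

theorem reverse_direction (τ : Cardinal.{u}) (hτ : Cardinal.aleph0 ≤ τ)
    {X : Type u} [t : TopologicalSpace X]
    (hD : #D = τ) (g : X → (ℕ → D) × (ℕ → unitInterval)) (hg : IsClosedEmbedding g) :
    (Superparacompact X ∧
      (∃ m : MetricSpace X, m.toUniformSpace.toTopologicalSpace = t ∧
        @CompleteSpace X m.toUniformSpace) ∧
      ∃ b : Set (Set X), TopologicalSpace.IsTopologicalBasis b ∧ #b ≤ τ) := by
  refine ⟨(superparacompact_codomain D).pullback hg, ?_, ?_⟩
  · -- complete metric
    set mY := codMetric D with hmY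
    set m : MetricSpace X := MetricSpace.induced g hg.injective mY with hm
    refine ⟨m, ?_, ?_⟩
    · have h1 : m.toUniformSpace.toTopologicalSpace
          = TopologicalSpace.induced g (mY.toUniformSpace.toTopologicalSpace) := rfl
      rw [h1, codMetric_topology]
      exact hg.isInducing.eq_induced.symm
    · haveI hco : @CompleteSpace _ mY.toUniformSpace := codMetric_complete D
      have hui : @IsUniformInducing X _ m.toUniformSpace mY.toUniformSpace g := ⟨rfl⟩
      rw [@completeSpace_iff_isComplete_range X _ m.toUniformSpace mY.toUniformSpace _ hui]
      have hcl : @IsClosed _ mY.toUniformSpace.toTopologicalSpace (range g) := by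
        rw [show mY.toUniformSpace.toTopologicalSpace
            = (instTopologicalSpaceProd : TopologicalSpace ((ℕ → D) × (ℕ → unitInterval)))
            from codMetric_topology D]
        exact hg.isClosed_range
      exact @IsClosed.isComplete _ mY.toUniformSpace hco _ hcl
  · -- basis
    obtain ⟨b₂, hb₂c, -, hb₂⟩ := exists_countable_basis (ℕ → unitInterval)
    set b₁ : Set (Set (ℕ → D)) := {c | ∃ s n, c = cyl s n} with hb₁def
    have hb₁ : IsTopologicalBasis b₁ := isTopologicalBasis_cyl
    set b₃ := image2 (· ×ˢ ·) b₁ b₂ with hb₃def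
    have hb₃ : IsTopologicalBasis b₃ := hb₁.prod hb₂
    refine ⟨(preimage g) '' b₃, hb₃.isInducing hg.isInducing, ?_⟩
    have h1 : #↥((preimage g) '' b₃) ≤ #↥b₃ := Cardinal.mk_image_le
    have hsurj : Function.Surjective
        (fun p : ↥b₁ × ↥b₂ => (⟨(p.1 : Set (ℕ → D)) ×ˢ (p.2 : Set (ℕ → unitInterval)),
          mem_image2_of_mem p.1.2 p.2.2⟩ : ↥b₃)) := by
      rintro ⟨S, u, hu, v, hv, rfl⟩
      exact ⟨(⟨u, hu⟩, ⟨v, hv⟩), rfl⟩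
    have h2 : #↥b₃ ≤ #(↥b₁ × ↥b₂) := Cardinal.mk_le_of_surjective hsurj
    have h3 := Cardinal.mk_prod (↥b₁) (↥b₂)
    have h4 : Cardinal.lift.{0} #↥b₁ ≤ τ := by
      rw [Cardinal.lift_id']
      calc #↥b₁ ≤ #D := mk_cylBasis_le (hD ▸ hτ)
        _ = τ := hD
    have h5 : Cardinal.lift.{u} #↥b₂ ≤ Cardinal.aleph0 := by
      haveI := hb₂c.to_subtype
      have : #↥b₂ ≤ Cardinal.aleph0 := Cardinal.mk_le_aleph0
      calc Cardinal.lift.{u} #↥b₂ ≤ Cardinal.lift.{u} Cardinal.aleph0 :=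
            Cardinal.lift_le.2 this
        _ = Cardinal.aleph0 := Cardinal.lift_aleph0
    calc #↥((preimage g) '' b₃) ≤ #↥b₃ := h1
      _ ≤ #(↥b₁ × ↥b₂) := h2
      _ = Cardinal.lift.{0} #↥b₁ * Cardinal.lift.{u} #↥b₂ := h3
      _ ≤ τ * Cardinal.aleph0 := mul_le_mul' h4 h5
      _ ≤ τ * τ := mul_le_mul_right hτ τ
      _ = τ := Cardinal.mul_eq_self hτ

end Reverse


section Forward
variable {X : Type u} [MetricSpace X] [CompleteSpace X]

theorem forward_direction (D : Type u) [TopologicalSpace D] [DiscreteTopology D]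
    (hDinf : Cardinal.aleph0 ≤ #D)
    (hsp : Superparacompact X)
    (b : Set (Set X)) (hb : IsTopologicalBasis b) (hbcard : #b ≤ #D) :
    ∃ g : X → (ℕ → D) × (ℕ → unitInterval), IsClosedEmbedding g := by
  classical
  by_cases hX : Nonempty X
  case neg =>
    -- X is empty
    have hEmpty : ∀ x : X, False := fun x => hX ⟨x⟩
    refine ⟨fun x => (hEmpty x).elim, ⟨⟨isInducing_iff_nhds.2 fun x => (hEmpty x).elim,
      fun x => (hEmpty x).elim⟩, ?_⟩⟩
    have : range (fun x : X => ((hEmpty x).elim : (ℕ → D) × (ℕ → unitInterval))) = ∅ := by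
      rw [range_eq_empty_iff]
      exact ⟨fun x => (hEmpty x).elim⟩
    rw [this]
    exact isClosed_empty
  haveI : Inhabited X := Classical.inhabited_of_nonempty hX
  -- the radii
  set r : ℕ → ℝ := fun n => (1/2 : ℝ) ^ n with hr
  have hrpos : ∀ n, 0 < r n := fun n => pow_pos (by norm_num) n
  have hrle1 : ∀ n, r n ≤ 1 := fun n => pow_le_one₀ (by norm_num) (by norm_num)
  -- finite-component covers by small sets
  have hcover : ∀ n : ℕ, ∃ ω : Set (Set X), IsFiniteComponentCover ω ∧
      ∀ A ∈ ω, ∃ c, A ⊆ Metric.ball c (r n / 8) := by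
    intro n
    obtain ⟨ω, hω, href⟩ := hsp (range (fun c => Metric.ball c (r n / 8)))
      (by rintro U ⟨c, rfl⟩; exact Metric.isOpen_ball)
      (by
        apply eq_univ_of_univ_subset
        rintro x -
        exact ⟨Metric.ball x (r n / 8), ⟨x, rfl⟩, Metric.mem_ball_self (by positivity)⟩)
    refine ⟨ω, hω, fun A hA => ?_⟩
    obtain ⟨U, ⟨c, rfl⟩, hsub⟩ := href A hA
    exact ⟨c, hsub⟩
  choose ω hω hsmall using hcover
  have hop : ∀ n, ∀ A ∈ ω n, IsOpen A := fun n => (hω n).1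
  have hcov : ∀ n, ⋃₀ ω n = Set.univ := fun n => (hω n).2.1
  have hcomp : ∀ n, ∀ M ∈ ω n, (Component (ω n) M).Finite := fun n => (hω n).2.2.2
  -- the chain relation
  set Rel : ℕ → X → X → Prop := fun n x y =>
    ∃ A B, A ∈ ω n ∧ B ∈ ω n ∧ x ∈ A ∧ y ∈ B ∧ Enchained (ω n) A B with hRel
  have hrefl : ∀ n x, Rel n x x := by
    intro n x
    have : x ∈ ⋃₀ ω n := (hcov n) ▸ mem_univ x
    obtain ⟨A, hA, hxA⟩ := this
    exact ⟨A, A, hA, hA, hxA, hxA, Relation.ReflTransGen.refl⟩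
  have hsymm : ∀ n x y, Rel n x y → Rel n y x := by
    rintro n x y ⟨A, B, hA, hB, hx, hy, hE⟩
    refine ⟨B, A, hB, hA, hy, hx, ?_⟩
    haveI : Std.Symm (ChainStep (ω n)) :=
      ⟨fun M N h => ⟨h.2.1, h.1, by rw [inter_comm]; exact h.2.2⟩⟩
    exact Relation.ReflTransGen.symmetric.symm _ _ hE
  have htrans : ∀ n x y z, Rel n x y → Rel n y z → Rel n x z := by
    rintro n x y z ⟨A, B, hA, hB, hx, hy, hE⟩ ⟨B', C, hB', hC, hy', hz, hE'⟩
    refine ⟨A, C, hA, hC, hx, hz, ?_⟩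
    exact (hE.tail ⟨hB, hB', ⟨y, hy, hy'⟩⟩).trans hE'
  set St : ℕ → Setoid X := fun n => ⟨Rel n, ⟨hrefl n, fun {a b} h => hsymm n a b h,
    fun {a b c} h h' => htrans n a b c h h'⟩⟩ with hSt
  -- pieces are open
  have hpiece_open : ∀ n x, IsOpen {y | Rel n x y} := by
    intro n x
    rw [isOpen_iff_forall_mem_open]
    rintro y ⟨A, B, hA, hB, hx, hy, hE⟩
    exact ⟨B, fun z hz => ⟨A, B, hA, hB, hx, hz, hE⟩, hop n B hB, hy⟩
  -- nets
  have hnet : ∀ (n : ℕ) (c : Quotient (St n)), ∃ (p : ℕ → X) (M : ℕ),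
      ∀ y, Quotient.mk (St n) y = c → ∃ i, i ≤ M ∧ dist y (p i) < r n / 4 := by
    intro n c
    obtain ⟨x, rfl⟩ := Quotient.exists_rep c
    have : x ∈ ⋃₀ ω n := (hcov n) ▸ mem_univ x
    obtain ⟨A₀, hA₀, hxA₀⟩ := this
    have hfin : (Component (ω n) A₀).Finite := hcomp n A₀ hA₀
    set pt : Set X → X := fun B => if h : B.Nonempty then h.choose else default with hpt
    set l : List (Set X) := hfin.toFinset.toList with hl
    refine ⟨fun i => pt (l.getD i ∅), l.length, ?_⟩
    intro y hy
    have hyx : Rel n y x := Quotient.exact hy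
    have hxy : Rel n x y := hsymm n y x hyx
    obtain ⟨A, B, hA, hB, hx, hy', hE⟩ := hxy
    have hBcomp : B ∈ Component (ω n) A₀ := by
      refine ⟨hB, ?_⟩
      exact (Relation.ReflTransGen.single ⟨hA₀, hA, ⟨x, hxA₀, hx⟩⟩).trans hE
    have hBl : B ∈ l := by
      rw [hl, Finset.mem_toList, Set.Finite.mem_toFinset]
      exact hBcomp
    obtain ⟨i, hi, hget⟩ := List.mem_iff_getElem.1 hBl
    refine ⟨i, le_of_lt hi, ?_⟩
    have hgd : l.getD i ∅ = B := by rw [List.getD_eq_getElem _ _ hi, hget]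
    have hBne : B.Nonempty := ⟨y, hy'⟩
    have hptB : pt B ∈ B := by
      rw [hpt]; simp only [dif_pos hBne]; exact hBne.choose_spec
    obtain ⟨cb, hcb⟩ := hsmall n B hB
    have h1 : dist y cb < r n / 8 := hcb hy'
    have h2 : dist (pt B) cb < r n / 8 := hcb hptB
    show dist y (pt (l.getD i ∅)) < r n / 4
    rw [hgd]
    calc dist y (pt B) ≤ dist y cb + dist (pt B) cb := dist_triangle_right _ _ _
      _ < r n / 8 + r n / 8 := add_lt_add h1 h2
      _ = r n / 4 := by ring
  choose P Mn hPspec using hnet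
  -- injections of the quotients into D
  have hcard : ∀ n, ∃ ι : Quotient (St n) → D, Function.Injective ι := by
    intro n
    have hgood : ∀ c : Quotient (St n), ∃ β : Set X, β ∈ b ∧
        ∃ x, Quotient.mk (St n) x = c ∧ x ∈ β ∧ β ⊆ {y | Rel n x y} := by
      intro c
      obtain ⟨x, rfl⟩ := Quotient.exists_rep c
      obtain ⟨β, hβb, hxβ, hsub⟩ := hb.exists_subset_of_mem_open
        (show x ∈ {y | Rel n x y} from hrefl n x) (hpiece_open n x)
      exact ⟨β, hβb, x, rfl, hxβ, hsub⟩
    choose φ hφb hφspec using hgood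
    have hinj : Function.Injective fun c => (⟨φ c, hφb c⟩ : ↥b) := by
      intro c c' h
      simp only [Subtype.mk.injEq] at h
      obtain ⟨x, hxc, hxβ, hsub⟩ := hφspec c
      obtain ⟨x', hxc', hxβ', hsub'⟩ := hφspec c'
      have : Rel n x x' := hsub (h ▸ hxβ')
      rw [← hxc, ← hxc']
      exact Quotient.sound this
    have hle : #(Quotient (St n)) ≤ #D :=
      le_trans (Cardinal.mk_le_of_injective hinj) hbcard
    exact (Cardinal.le_def _ _).1 hle |>.elim (fun e => ⟨e, e.injective⟩)
  choose ι hι using hcard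
  -- the maps
  set f : X → ℕ → D := fun x n => ι n (Quotient.mk (St n) x) with hf
  set E : X → ℕ → ℕ → ℝ := fun x n i =>
    min 1 (dist x (P n (Quotient.mk (St n) x) i)) with hE
  have hE01 : ∀ x n i, E x n i ∈ unitInterval :=
    fun x n i => ⟨le_min zero_le_one dist_nonneg, min_le_left _ _⟩
  set g : X → (ℕ → D) × (ℕ → unitInterval) := fun x =>
    (f x, fun k => ⟨E x k.unpair.1 k.unpair.2, hE01 x _ _⟩) with hg
  -- local constancy of the quotient maps
  have hloc : ∀ n x y, Rel n x y → Quotient.mk (St n) y = Quotient.mk (St n) x :=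
    fun n x y h => (Quotient.sound (h : (St n).r x y)).symm
  -- continuity
  have hcontf : ∀ n, Continuous fun x => ι n (Quotient.mk (St n) x) := by
    intro n
    rw [continuous_iff_continuousAt]
    intro x
    apply continuousAt_const.congr
    filter_upwards [(hpiece_open n x).mem_nhds (hrefl n x)] with y hy
    exact (congrArg (ι n) (hloc n x y hy)).symm
  have hcontE : ∀ n i, Continuous fun x => E x n i := by
    intro n i
    rw [continuous_iff_continuousAt]
    intro x
    have hc : Continuous fun y : X => min 1 (dist y (P n (Quotient.mk (St n) x) i)) :=
      continuous_const.min (continuous_id.dist continuous_const)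
    apply hc.continuousAt.congr
    filter_upwards [(hpiece_open n x).mem_nhds (hrefl n x)] with y hy
    show min 1 (dist y _) = E y n i
    rw [hE]
    simp only
    rw [hloc n x y hy]
  have hgcont : Continuous g := by
    apply Continuous.prodMk
    · exact continuous_pi hcontf
    · exact continuous_pi fun k => Continuous.subtype_mk (hcontE k.unpair.1 k.unpair.2) _
  -- separation
  have hminlt : ∀ (d a : ℝ), a ≤ 1 → min 1 d < a → d < a := by
    intro d a ha h
    rcases min_lt_iff.1 h with h1 | h1
    · exact absurd (lt_of_lt_of_le h1 ha) (lt_irrefl 1)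
    · exact h1
  have hsep : ∀ n x y, Quotient.mk (St n) y = Quotient.mk (St n) x →
      ∀ i, dist x (P n (Quotient.mk (St n) x) i) < r n / 4 →
      E y n i < r n / 2 → dist x y < r n := by
    intro n x y hclass i hxi hyi
    have hEy : E y n i = min 1 (dist y (P n (Quotient.mk (St n) x) i)) := by
      rw [hE]; simp only; rw [hclass]
    rw [hEy] at hyi
    have hdy : dist y (P n (Quotient.mk (St n) x) i) < r n / 2 :=
      hminlt _ _ (by linarith [hrle1 n, hrpos n]) hyi
    calc dist x y ≤ dist x (P n (Quotient.mk (St n) x) i)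
          + dist y (P n (Quotient.mk (St n) x) i) := dist_triangle_right _ _ _
      _ < r n / 4 + r n / 2 := add_lt_add hxi hdy
      _ ≤ r n := by linarith [hrpos n]
  -- the window property
  have hwin : ∀ (x : X) (ε : ℝ), 0 < ε →
      ∃ W ∈ 𝓝 (g x), ∀ y, g y ∈ W → dist x y < ε := by
    intro x ε hε
    obtain ⟨n, hn⟩ := exists_pow_lt_of_lt_one hε (by norm_num : (1/2 : ℝ) < 1)
    have hrn : r n < ε := hn
    obtain ⟨i₀, hi₀M, hxi₀⟩ := hPspec n (Quotient.mk (St n) x) x rfl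
    set k₀ := Nat.pair n i₀ with hk₀
    set W : Set ((ℕ → D) × (ℕ → unitInterval)) :=
      ((fun z : (ℕ → D) × (ℕ → unitInterval) => z.1 n) ⁻¹' {f x n}) ∩
      ((fun z : (ℕ → D) × (ℕ → unitInterval) => z.2 k₀) ⁻¹'
        Metric.ball ((g x).2 k₀) (r n / 4)) with hW
    have hWopen : IsOpen W := by
      apply IsOpen.inter
      · exact (isOpen_discrete _).preimage ((continuous_apply n).comp continuous_fst)
      · exact Metric.isOpen_ball.preimage ((continuous_apply k₀).comp continuous_snd)
    have hWmem : g x ∈ W := by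
      constructor
      · exact rfl
      · exact Metric.mem_ball_self (by positivity)
    refine ⟨W, hWopen.mem_nhds hWmem, ?_⟩
    intro y hy
    obtain ⟨hy1, hy2⟩ := hy
    have hclass : Quotient.mk (St n) y = Quotient.mk (St n) x :=
      hι n (by exact hy1)
    have hy2' : dist (E y n i₀) (E x n i₀) < r n / 4 := by
      have h := hy2
      simp only [mem_preimage, Metric.mem_ball, Subtype.dist_eq] at h
      have e12 : dist ((g y).2 k₀ : ℝ) ((g x).2 k₀ : ℝ) = dist (E y n i₀) (E x n i₀) := by
        simp [hg, hk₀, Nat.unpair_pair]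
      rwa [e12] at h
    have hEx : E x n i₀ = dist x (P n (Quotient.mk (St n) x) i₀) := by
      rw [hE]
      simp only
      exact min_eq_right (le_trans (le_of_lt hxi₀) (by linarith [hrle1 n, hrpos n]))
    have hEy : E y n i₀ < r n / 2 := by
      have h1 : E y n i₀ ≤ E x n i₀ + dist (E y n i₀) (E x n i₀) := by
        rw [Real.dist_eq]
        cases abs_cases (E y n i₀ - E x n i₀) <;> linarith [abs_nonneg (E y n i₀ - E x n i₀)]
      have hxi₀' : E x n i₀ < r n / 4 := by rw [hEx]; exact hxi₀
      calc E y n i₀ ≤ E x n i₀ + dist (E y n i₀) (E x n i₀) := h1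
        _ < r n / 4 + r n / 4 := add_lt_add hxi₀' hy2'
        _ = r n / 2 := by ring
    exact lt_trans (hsep n x y hclass i₀ hxi₀ hEy) hrn
  -- injectivity
  have hinj : Function.Injective g := by
    intro x y hxy
    have : ∀ ε : ℝ, 0 < ε → dist x y < ε := by
      intro ε hε
      obtain ⟨W, hWmem, hWprop⟩ := hwin x ε hε
      exact hWprop y (hxy ▸ mem_of_mem_nhds hWmem)
    by_contra hne
    have hd : 0 < dist x y := dist_pos.2 fun h => hne (h ▸ rfl)
    exact lt_irrefl _ (this _ hd)
  -- inducing
  have hind : IsInducing g := by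
    rw [isInducing_iff_nhds]
    intro x
    refine le_antisymm ((hgcont.tendsto x).le_comap) ?_
    intro s hs
    obtain ⟨ε, hε, hball⟩ := Metric.mem_nhds_iff.1 hs
    obtain ⟨W, hWmem, hWprop⟩ := hwin x ε hε
    refine Filter.mem_comap.2 ⟨W, hWmem, ?_⟩
    intro y hy
    apply hball
    rw [Metric.mem_ball, dist_comm]
    exact hWprop y hy
  -- closed range
  have hclosed : IsClosed (range g) := by
    apply IsSeqClosed.isClosed
    intro u z hu hconv
    choose x hx using hu
    -- x: ℕ → X with g (x k) = u k
    have hcauchy : CauchySeq x := by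
      rw [Metric.cauchySeq_iff]
      intro ε hε
      obtain ⟨n, hn⟩ := exists_pow_lt_of_lt_one hε (by norm_num : (1/2 : ℝ) < 1)
      have hrn : r n < ε := hn
      -- the first coordinates stabilize
      have hfst : Tendsto (fun k => (u k).1 n) atTop (𝓝 (z.1 n)) :=
        (((continuous_apply n).comp continuous_fst).tendsto z).comp hconv
      have hstab : ∀ᶠ k in atTop, (u k).1 n = z.1 n :=
        hfst (IsOpen.mem_nhds (isOpen_discrete _) (mem_singleton (z.1 n)))
      obtain ⟨N₁, hN₁⟩ := eventually_atTop.1 hstab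
      have hclassk : ∀ k ≥ N₁, Quotient.mk (St n) (x k) = Quotient.mk (St n) (x N₁) := by
        intro k hk
        apply hι n
        show ι n _ = ι n _
        have e1 : ι n (Quotient.mk (St n) (x k)) = (u k).1 n := by
          rw [← hx k]
        have e2 : ι n (Quotient.mk (St n) (x N₁)) = (u N₁).1 n := by
          rw [← hx N₁]
        rw [e1, e2, hN₁ k hk, hN₁ N₁ (le_refl N₁)]
      set c := Quotient.mk (St n) (x N₁) with hc
      -- choose indices via the net property
      have hik : ∀ k : ℕ, ∃ i, i ≤ Mn n c ∧ (N₁ ≤ k → dist (x k) (P n c i) < r n / 4) := by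
        intro k
        by_cases hk : N₁ ≤ k
        · obtain ⟨i, hiM, hdi⟩ := hPspec n c (x k) (hclassk k hk)
          exact ⟨i, hiM, fun _ => hdi⟩
        · exact ⟨0, Nat.zero_le _, fun h => absurd h hk⟩
      choose ik hikM hikd using hik
      -- pigeonhole: some index occurs infinitely often beyond N₁
      have hpig : ∃ i₀, {k : ℕ | N₁ ≤ k ∧ ik k = i₀}.Infinite := by
        by_contra hcon
        push_neg at hcon
        have hU : {k : ℕ | N₁ ≤ k} ⊆
            ⋃ i ∈ Finset.range (Mn n c + 1), {k | N₁ ≤ k ∧ ik k = i} := by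
          intro k hk
          exact mem_biUnion (Finset.mem_range.2 (Nat.lt_succ_of_le (hikM k))) ⟨hk, rfl⟩
        have hfin : (⋃ i ∈ Finset.range (Mn n c + 1),
            {k : ℕ | N₁ ≤ k ∧ ik k = i}).Finite :=
          Set.Finite.biUnion (Finset.range (Mn n c + 1)).finite_toSet
            (fun i _ => hcon i)
        have : ({k : ℕ | N₁ ≤ k}).Finite := hfin.subset hU
        exact (Set.Ici_infinite N₁) (by simpa [Set.Ici] using this)
      obtain ⟨i₀, hi₀inf⟩ := hpig
      -- the coordinate k₀ converges
      set k₀ := Nat.pair n i₀ with hk₀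
      have hsnd : Tendsto (fun k => E (x k) n i₀) atTop (𝓝 (z.2 k₀).val) := by
        have hcz : Continuous (fun w : (ℕ → D) × (ℕ → unitInterval) => (w.2 k₀ : ℝ)) :=
          continuous_subtype_val.comp ((continuous_apply k₀).comp continuous_snd)
        have h1 := (hcz.tendsto z).comp hconv
        apply h1.congr
        intro k
        show ((u k).2 k₀ : ℝ) = E (x k) n i₀
        rw [← hx k]
        simp [hg, hk₀, Nat.unpair_pair]
      -- the limit is small
      have hlim_le : (z.2 k₀).val ≤ r n / 4 := by
        by_contra hgt
        push_neg at hgt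
        have hev : ∀ᶠ k in atTop, r n / 4 < E (x k) n i₀ :=
          hsnd (eventually_gt_nhds hgt)
        obtain ⟨N₂, hN₂⟩ := eventually_atTop.1 hev
        obtain ⟨k, hkmem, hkgt⟩ := hi₀inf.exists_gt (max N₁ N₂)
        obtain ⟨hkN₁, hki⟩ := hkmem
        have h1 : dist (x k) (P n c i₀) < r n / 4 := hki ▸ hikd k hkN₁
        have h2 : E (x k) n i₀ ≤ dist (x k) (P n c i₀) := by
          rw [hE]
          simp only
          rw [hclassk k hkN₁]
          exact min_le_right _ _
        have h3 : r n / 4 < E (x k) n i₀ :=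
          hN₂ k (le_of_lt (lt_of_le_of_lt (le_max_right N₁ N₂) hkgt))
        linarith
      -- eventually all terms are close to the net point
      obtain ⟨N₂, hN₂⟩ := Metric.tendsto_atTop.1 hsnd (r n / 8) (by positivity)
      set N := max N₁ N₂ with hN
      refine ⟨N, ?_⟩
      have hkey : ∀ k ≥ N, dist (x k) (P n c i₀) < r n / 2 := by
        intro k hk
        have hk1 : N₁ ≤ k := le_trans (le_max_left _ _) hk
        have hk2 : N₂ ≤ k := le_trans (le_max_right _ _) hk
        have h1 : dist (E (x k) n i₀) (z.2 k₀).val < r n / 8 := hN₂ k hk2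
        have h2 : E (x k) n i₀ < r n / 4 + r n / 8 := by
          rw [Real.dist_eq] at h1
          cases abs_cases (E (x k) n i₀ - (z.2 k₀).val) <;> linarith
        have h3 : E (x k) n i₀ = min 1 (dist (x k) (P n c i₀)) := by
          rw [hE]; simp only; rw [hclassk k hk1]
        rw [h3] at h2
        have := hminlt (dist (x k) (P n c i₀)) (r n / 4 + r n / 8)
          (by linarith [hrle1 n, hrpos n]) h2
        linarith [hrpos n]
      intro m hm k hk
      calc dist (x m) (x k) ≤ dist (x m) (P n c i₀) + dist (x k) (P n c i₀) :=
            dist_triangle_right _ _ _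
        _ < r n / 2 + r n / 2 := add_lt_add (hkey m hm) (hkey k hk)
        _ = r n := by ring
        _ < ε := hrn
    obtain ⟨xlim, hxl⟩ := cauchySeq_tendsto_of_complete hcauchy
    have h1 : Tendsto (fun k => g (x k)) atTop (𝓝 (g xlim)) :=
      (hgcont.tendsto xlim).comp hxl
    have h2 : Tendsto (fun k => g (x k)) atTop (𝓝 z) := by
      apply hconv.congr
      intro k
      rw [hx k]
    exact ⟨xlim, (tendsto_nhds_unique h1 h2)⟩
  exact ⟨g, ⟨⟨hind, hinj⟩, hclosed⟩⟩

end Forward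

end AuxSuper




/-- A metrizable space is superparacompact, completely metrizable and of weight
≤ τ iff it is homeomorphic to a closed subspace of B(τ) × Q^∞ (τ ≥ ℵ₀). -/
theorem superparacompact_iff_closed_embedding_baire_prod_cube
    (τ : Cardinal.{u}) (hτ : Cardinal.aleph0 ≤ τ)
    {X : Type u} [t : TopologicalSpace X] [TopologicalSpace.MetrizableSpace X]
    (D : Type u) [TopologicalSpace D] [DiscreteTopology D] (hD : #D = τ) :
    (Superparacompact X ∧
      (∃ m : MetricSpace X, m.toUniformSpace.toTopologicalSpace = t ∧
        @CompleteSpace X m.toUniformSpace) ∧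
      ∃ b : Set (Set X), TopologicalSpace.IsTopologicalBasis b ∧ #b ≤ τ) ↔
    ∃ g : X → (ℕ → D) × (ℕ → unitInterval), IsClosedEmbedding g := by
  constructor
  · rintro ⟨hsp, ⟨m, hm, hcm⟩, b, hb, hbc⟩
    subst hm
    exact @forward_direction X m hcm D _ _ (by rw [hD]; exact hτ) hsp b hb
      (by rw [hD]; exact hbc)
  · rintro ⟨g, hg⟩
    exact reverse_direction τ hτ hD g hg
end

section
/- A uniform limit of a sequence of continuous maps f_m : X → P into a metric polyhedron P, where each f_m is obtained from f_i by 'descent' with respect to a triangulation K (i.e., the carrier of f_m(x) is a face of the carrier of f_i(x) for every x), is itself a continuous map obtained from f_i by descent with respect to K. -/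
open Set Filter

/-- A uniform limit of continuous maps into a triangulated metric polyhedron,
each obtained from f by descent with respect to the triangulation K (the closure
of the carrier of F m x is contained in the closure of the carrier of f x), is
continuous and also obtained from f by descent.

Here the triangulation K is modelled as a partition of P into (open) simplexes,
`carrier p` is the unique member of K containing p, and the hypothesis
`hfaces` records that the closure of a simplex is the union of its faces. -/
theorem descent_of_uniform_limit {X : Type*} [TopologicalSpace X]
    {P : Type*} [MetricSpace P]
    (K : Set (Set P)) (hcover : ⋃₀ K = Set.univ) (hdisj : K.PairwiseDisjoint id)
    (carrier : P → Set P) (hcar : ∀ p : P, carrier p ∈ K ∧ p ∈ carrier p)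
    (hfaces : ∀ σ ∈ K, closure σ ⊆ ⋃₀ {τ ∈ K | closure τ ⊆ closure σ})
    (f : X → P) (F : ℕ → X → P) (hFc : ∀ m, Continuous (F m))
    (hdesc : ∀ m x, closure (carrier (F m x)) ⊆ closure (carrier (f x)))
    (g : X → P) (hunif : TendstoUniformly F g atTop) :
    Continuous g ∧ ∀ x, closure (carrier (g x)) ⊆ closure (carrier (f x)) := by
  refine ⟨hunif.continuous (Eventually.of_forall hFc).frequently, fun x => ?_⟩
  -- g x is a limit of F m x, each in closure (carrier (f x)), which is closed
  have hlim : Tendsto (fun m => F m x) atTop (nhds (g x)) := hunif.tendsto_at x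
  have hmem : g x ∈ closure (carrier (f x)) := by
    have : ∀ m, F m x ∈ closure (carrier (f x)) := fun m =>
      hdesc m x (subset_closure (hcar (F m x)).2)
    exact isClosed_closure.mem_of_tendsto hlim (Eventually.of_forall this)
  obtain ⟨τ, ⟨hτK, hτcl⟩, hgτ⟩ := hfaces _ (hcar (f x)).1 hmem
  have : carrier (g x) = τ := by
    by_contra hne
    exact (hdisj (hcar (g x)).1 hτK hne).ne_of_mem (hcar (g x)).2 hgτ rfl
  rw [this]
  exact closure_minimal (subset_trans subset_closure hτcl) isClosed_closure
end
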